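/- arXiv:1612.09323 — 6 statements merged into one kernel-verified Lean document; each statement's English description precedes it below -/
import Mathlib

section
/- Let δ > 0 and let h₁, h₂ ∈ K with h₁(x) ≤ h₂(x) for all x ≥ 0. Set Ψ_{hᵢ}(x) = 1 + δ·hᵢ(x). Then for every η ≥ 0, |exp(−2∫₀^η ξ/Ψ_{h₁}(ξ) dξ) − exp(−2∫₀^η ξ/Ψ_{h₂}(ξ) dξ)| ≤ δ·‖h₂ − h₁‖_∞ · η² · exp(−η²/(1+δ)), where ‖·‖_∞ denotes the supremum norm over [0,∞). -/
open Real MeasureTheory Filter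

/-- `Ψ_h(x) = 1 + δ·h(x)`. -/
noncomputable def Psi (δ : ℝ) (h : ℝ → ℝ) (x : ℝ) : ℝ := 1 + δ * h x

/-- The integrand `(1/Ψ_h(η)) · exp(−2∫₀^η ξ/Ψ_h(ξ) dξ)`. -/
noncomputable def F (δ : ℝ) (h : ℝ → ℝ) (η : ℝ) : ℝ :=
  (1 / Psi δ h η) * Real.exp (-2 * ∫ ξ in (0:ℝ)..η, ξ / Psi δ h ξ)

/-- The full integral `∫₀^∞ (1/Ψ_h(η)) · exp(−2∫₀^η ξ/Ψ_h(ξ) dξ) dη`. -/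
noncomputable def Itot (δ : ℝ) (h : ℝ → ℝ) : ℝ := ∫ η in Set.Ioi (0:ℝ), F δ h η

/-- The constant `C_h`. -/
noncomputable def Ch (δ : ℝ) (h : ℝ → ℝ) : ℝ := (Itot δ h)⁻¹

/-- Membership in the set `K`: analytic on `[0,∞)`, `0 ≤ h ≤ 1` there,
`h(0) = 0` and `h(x) → 1` as `x → ∞`. -/
def MemK (h : ℝ → ℝ) : Prop :=
  AnalyticOnNhd ℝ h (Set.Ici 0) ∧ (∀ x ≥ 0, 0 ≤ h x ∧ h x ≤ 1) ∧ h 0 = 0 ∧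
    Tendsto h atTop (nhds 1)

/-- Supremum norm over `[0,∞)`. -/
noncomputable def supNorm (f : ℝ → ℝ) : ℝ := ⨆ x : Set.Ici (0:ℝ), |f (x : ℝ)|

theorem exp_integral_diff_bound (δ : ℝ) (hδ : 0 < δ)
    (h₁ h₂ : ℝ → ℝ) (hK₁ : MemK h₁) (hK₂ : MemK h₂)
    (hle : ∀ x ≥ (0:ℝ), h₁ x ≤ h₂ x) (η : ℝ) (hη : 0 ≤ η) :
    |Real.exp (-2 * ∫ ξ in (0:ℝ)..η, ξ / Psi δ h₁ ξ) -
      Real.exp (-2 * ∫ ξ in (0:ℝ)..η, ξ / Psi δ h₂ ξ)| ≤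
    δ * supNorm (h₂ - h₁) * η ^ 2 * Real.exp (-η ^ 2 / (1 + δ)) := by
  set s := supNorm (h₂ - h₁) with hsdef
  -- sup norm facts
  have hbdd : BddAbove (Set.range fun x : Set.Ici (0:ℝ) => |(h₂ - h₁) (x : ℝ)|) := by
    refine ⟨1, ?_⟩
    rintro y ⟨⟨x, hx⟩, rfl⟩
    have p1 := hK₁.2.1 x hx
    have p2 := hK₂.2.1 x hx
    simp only [Pi.sub_apply]
    rw [abs_le]
    constructor <;> linarith
  have hsle : ∀ x ≥ (0:ℝ), h₂ x - h₁ x ≤ s := by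
    intro x hx
    have h1 : |(h₂ - h₁) x| ≤ s := le_ciSup hbdd (⟨x, hx⟩ : Set.Ici (0:ℝ))
    have h2 : h₂ x - h₁ x ≤ |(h₂ - h₁) x| := by
      simp only [Pi.sub_apply]; exact le_abs_self _
    linarith
  have hs0 : 0 ≤ s := by
    have h1 : |(h₂ - h₁) (0:ℝ)| ≤ s := le_ciSup hbdd (⟨0, Set.self_mem_Ici⟩ : Set.Ici (0:ℝ))
    exact le_trans (abs_nonneg _) h1
  -- Psi bounds
  have hP : ∀ (h : ℝ → ℝ), MemK h → ∀ x ∈ Set.Icc (0:ℝ) η,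
      1 ≤ Psi δ h x ∧ Psi δ h x ≤ 1 + δ := by
    intro h hK x hx
    have p := hK.2.1 x hx.1
    constructor
    · simp only [Psi]; nlinarith
    · simp only [Psi]; nlinarith
  -- continuity / integrability
  have hcont : ∀ (h : ℝ → ℝ), MemK h →
      ContinuousOn (fun ξ => ξ / Psi δ h ξ) (Set.Icc (0:ℝ) η) := by
    intro h hK
    have hch : ContinuousOn h (Set.Icc (0:ℝ) η) :=
      (hK.1.continuousOn).mono (fun x hx => hx.1)
    have hc : ContinuousOn (fun ξ => Psi δ h ξ) (Set.Icc (0:ℝ) η) := by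
      show ContinuousOn (fun ξ => 1 + δ * h ξ) (Set.Icc (0:ℝ) η)
      exact continuousOn_const.add (continuousOn_const.mul hch)
    exact continuousOn_id.div hc (fun x hx => by have := (hP h hK x hx).1; linarith)
  have int₁ : IntervalIntegrable (fun ξ => ξ / Psi δ h₁ ξ) volume 0 η := by
    have := hcont h₁ hK₁
    apply ContinuousOn.intervalIntegrable
    rwa [Set.uIcc_of_le hη]
  have int₂ : IntervalIntegrable (fun ξ => ξ / Psi δ h₂ ξ) volume 0 η := by
    have := hcont h₂ hK₂
    apply ContinuousOn.intervalIntegrable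
    rwa [Set.uIcc_of_le hη]
  set A := ∫ ξ in (0:ℝ)..η, ξ / Psi δ h₁ ξ with hA
  set B := ∫ ξ in (0:ℝ)..η, ξ / Psi δ h₂ ξ with hB
  -- B ≤ A
  have hBA : B ≤ A := by
    apply intervalIntegral.integral_mono_on hη int₂ int₁
    intro x hx
    have p1 := hP h₁ hK₁ x hx
    have p2 := hP h₂ hK₂ x hx
    have hPle : Psi δ h₁ x ≤ Psi δ h₂ x := by
      simp only [Psi]; nlinarith [hle x hx.1]
    gcongr
    · exact hx.1
    · linarith
  -- lower bound on B
  have hBlow : η ^ 2 / 2 / (1 + δ) ≤ B := by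
    have hc : IntervalIntegrable (fun ξ : ℝ => ξ / (1 + δ)) volume 0 η := by
      apply Continuous.intervalIntegrable
      exact continuous_id.div_const _
    have h1 : (∫ ξ in (0:ℝ)..η, ξ / (1 + δ)) ≤ B := by
      apply intervalIntegral.integral_mono_on hη hc int₂
      intro x hx
      have p2 := hP h₂ hK₂ x hx
      gcongr
      · exact hx.1
      · linarith
      · exact p2.2
    have h2 : (∫ ξ in (0:ℝ)..η, ξ / (1 + δ)) = η ^ 2 / 2 / (1 + δ) := by
      rw [intervalIntegral.integral_div, integral_id]
      ring
    linarith
  -- upper bound on A - B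
  have hdiff : A - B ≤ δ * s * (η ^ 2 / 2) := by
    have hc : IntervalIntegrable (fun ξ : ℝ => δ * s * ξ) volume 0 η := by
      apply Continuous.intervalIntegrable
      exact continuous_const.mul continuous_id
    have h1 : (∫ ξ in (0:ℝ)..η, (ξ / Psi δ h₁ ξ - ξ / Psi δ h₂ ξ)) ≤
        ∫ ξ in (0:ℝ)..η, δ * s * ξ := by
      apply intervalIntegral.integral_mono_on hη (int₁.sub int₂) hc
      intro x hx
      have p1 := hP h₁ hK₁ x hx
      have p2 := hP h₂ hK₂ x hx
      have hne1 : Psi δ h₁ x ≠ 0 := by linarith [p1.1]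
      have hne2 : Psi δ h₂ x ≠ 0 := by linarith [p2.1]
      rw [div_sub_div _ _ hne1 hne2]
      have hnum : x * Psi δ h₂ x - Psi δ h₁ x * x = x * (δ * (h₂ x - h₁ x)) := by
        simp only [Psi]; ring
      rw [hnum]
      have hd0 : 0 ≤ h₂ x - h₁ x := by linarith [hle x hx.1]
      have hnn : 0 ≤ x * (δ * (h₂ x - h₁ x)) := mul_nonneg hx.1 (mul_nonneg hδ.le hd0)
      have hden : 1 ≤ Psi δ h₁ x * Psi δ h₂ x := by nlinarith [p1.1, p2.1]
      calc x * (δ * (h₂ x - h₁ x)) / (Psi δ h₁ x * Psi δ h₂ x)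
          ≤ x * (δ * (h₂ x - h₁ x)) := div_le_self hnn hden
        _ ≤ x * (δ * s) := by
            exact mul_le_mul_of_nonneg_left
              (mul_le_mul_of_nonneg_left (hsle x hx.1) hδ.le) hx.1
        _ = δ * s * x := by ring
    have h2 : (∫ ξ in (0:ℝ)..η, (ξ / Psi δ h₁ ξ - ξ / Psi δ h₂ ξ)) = A - B := by
      rw [intervalIntegral.integral_sub int₁ int₂]
    have h3 : (∫ ξ in (0:ℝ)..η, δ * s * ξ) = δ * s * (η ^ 2 / 2) := by
      rw [intervalIntegral.integral_const_mul, integral_id]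
      ring
    linarith
  -- exponential estimates
  have hexpB : Real.exp (-2 * B) ≤ Real.exp (-η ^ 2 / (1 + δ)) := by
    apply Real.exp_le_exp.2
    have heq : η ^ 2 / (1 + δ) = 2 * (η ^ 2 / 2 / (1 + δ)) := by
      field_simp
    rw [neg_div]
    linarith
  have habs : |Real.exp (-2 * A) - Real.exp (-2 * B)| =
      Real.exp (-2 * B) - Real.exp (-2 * A) := by
    rw [abs_sub_comm, abs_of_nonneg]
    have : Real.exp (-2 * A) ≤ Real.exp (-2 * B) := Real.exp_le_exp.2 (by linarith)
    linarith
  rw [habs]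
  have hsplit : Real.exp (-2 * A) = Real.exp (-2 * B) * Real.exp (-(2 * A - 2 * B)) := by
    rw [← Real.exp_add]; ring_nf
  have h1mt : 1 - (2 * A - 2 * B) ≤ Real.exp (-(2 * A - 2 * B)) := by
    have := Real.add_one_le_exp (-(2 * A - 2 * B))
    linarith
  have hkey : Real.exp (-2 * B) - Real.exp (-2 * A) ≤
      Real.exp (-2 * B) * (2 * A - 2 * B) := by
    rw [hsplit]
    nlinarith [Real.exp_pos (-2 * B),
      mul_le_mul_of_nonneg_left h1mt (le_of_lt (Real.exp_pos (-2 * B)))]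
  have hfin : Real.exp (-2 * B) * (2 * A - 2 * B) ≤
      Real.exp (-η ^ 2 / (1 + δ)) * (δ * s * η ^ 2) := by
    apply mul_le_mul hexpB (by linarith) (by linarith) (Real.exp_nonneg _)
  calc Real.exp (-2 * B) - Real.exp (-2 * A) ≤
      Real.exp (-2 * B) * (2 * A - 2 * B) := hkey
    _ ≤ Real.exp (-η ^ 2 / (1 + δ)) * (δ * s * η ^ 2) := hfin
    _ = δ * s * η ^ 2 * Real.exp (-η ^ 2 / (1 + δ)) := by ring
end

section
/- Let δ > 0 and h₁, h₂ ∈ K, and set Ψ_{hᵢ}(x) = 1 + δ·hᵢ(x). Then for every x ≥ 0, ∫₀^x | (1/Ψ_{h₁}(η))·exp(−2∫₀^η ξ/Ψ_{h₁}(ξ) dξ) − (1/Ψ_{h₂}(η))·exp(−2∫₀^η ξ/Ψ_{h₂}(ξ) dξ) | dη ≤ (√π/4) · δ · √(1+δ) · (3+δ) · ‖h₁ − h₂‖_∞. -/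
open Real MeasureTheory Filter

lemma psi_ge_one {δ : ℝ} (hδ : 0 < δ) {h : ℝ → ℝ} (hK : MemK h) {y : ℝ} (hy : 0 ≤ y) :
    1 ≤ Psi δ h y := by
  have := (hK.2.1 y hy).1
  unfold Psi; nlinarith

lemma psi_le {δ : ℝ} (hδ : 0 < δ) {h : ℝ → ℝ} (hK : MemK h) {y : ℝ} (hy : 0 ≤ y) :
    Psi δ h y ≤ 1 + δ := by
  have := (hK.2.1 y hy).2
  unfold Psi; nlinarith

lemma psi_pos {δ : ℝ} (hδ : 0 < δ) {h : ℝ → ℝ} (hK : MemK h) {y : ℝ} (hy : 0 ≤ y) :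
    0 < Psi δ h y := lt_of_lt_of_le one_pos (psi_ge_one hδ hK hy)

lemma psi_contAt {δ : ℝ} {h : ℝ → ℝ} (hK : MemK h) {y : ℝ} (hy : 0 ≤ y) :
    ContinuousAt (Psi δ h) y := by
  have := (hK.1 y hy).continuousAt
  exact continuousAt_const.add (continuousAt_const.mul this)

lemma integrand_contOn {δ : ℝ} (hδ : 0 < δ) {h : ℝ → ℝ} (hK : MemK h) {a : ℝ} (ha : 0 ≤ a) :
    ContinuousOn (fun ξ => ξ / Psi δ h ξ) (Set.Icc 0 a) := by
  intro y hy
  exact (continuousAt_id.div (psi_contAt hK hy.1) (psi_pos hδ hK hy.1).ne').continuousWithinAt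

lemma integrand_ii {δ : ℝ} (hδ : 0 < δ) {h : ℝ → ℝ} (hK : MemK h) {a : ℝ} (ha : 0 ≤ a) :
    IntervalIntegrable (fun ξ => ξ / Psi δ h ξ) volume 0 a := by
  apply ContinuousOn.intervalIntegrable
  rw [Set.uIcc_of_le ha]
  exact integrand_contOn hδ hK ha

lemma A_lower {δ : ℝ} (hδ : 0 < δ) {h : ℝ → ℝ} (hK : MemK h) {η : ℝ} (hη : 0 ≤ η) :
    η ^ 2 / (2 * (1 + δ)) ≤ ∫ ξ in (0:ℝ)..η, ξ / Psi δ h ξ := by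
  have h1 : ∫ ξ in (0:ℝ)..η, ξ / (1 + δ) = η ^ 2 / (2 * (1 + δ)) := by
    rw [intervalIntegral.integral_div, integral_id]
    field_simp
    ring
  rw [← h1]
  apply intervalIntegral.integral_mono_on hη
  · apply ContinuousOn.intervalIntegrable
    fun_prop (disch := intros; nlinarith)
  · exact integrand_ii hδ hK hη
  · intro ξ hξ
    have h2 := psi_le hδ hK hξ.1
    have h3 := psi_pos hδ hK hξ.1
    gcongr
    exact hξ.1

lemma sub_le_supNorm {h₁ h₂ : ℝ → ℝ} (hK₁ : MemK h₁) (hK₂ : MemK h₂) {y : ℝ} (hy : 0 ≤ y) :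
    |h₁ y - h₂ y| ≤ supNorm (h₁ - h₂) := by
  have hb : BddAbove (Set.range fun x : Set.Ici (0:ℝ) => |(h₁ - h₂) (x : ℝ)|) := by
    refine ⟨2, ?_⟩
    rintro z ⟨⟨w, hw⟩, rfl⟩
    have g1 := hK₁.2.1 w hw
    have g2 := hK₂.2.1 w hw
    simp only [Pi.sub_apply]
    rw [abs_le]; constructor <;> nlinarith
  have := le_ciSup hb (⟨y, hy⟩ : Set.Ici (0:ℝ))
  simpa [supNorm] using this

lemma supNorm_nonneg {h₁ h₂ : ℝ → ℝ} (hK₁ : MemK h₁) (hK₂ : MemK h₂) :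
    0 ≤ supNorm (h₁ - h₂) :=
  le_trans (abs_nonneg _) (sub_le_supNorm hK₁ hK₂ le_rfl)

lemma abs_exp_sub_exp_le {a b c : ℝ} (ha : c ≤ a) (hb : c ≤ b) :
    |Real.exp (-a) - Real.exp (-b)| ≤ Real.exp (-c) * |a - b| := by
  wlog hab : a ≤ b generalizing a b
  · rw [abs_sub_comm, abs_sub_comm a b]
    exact this hb ha (le_of_not_ge hab)
  rw [abs_of_nonneg (sub_nonneg.2 (Real.exp_le_exp.2 (neg_le_neg hab))),
    abs_of_nonpos (by linarith), neg_sub]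
  have h1 : Real.exp (-a) ≤ Real.exp (-c) := Real.exp_le_exp.2 (neg_le_neg ha)
  have h2 : (-(b - a)) + 1 ≤ Real.exp (-(b - a)) := Real.add_one_le_exp _
  have h3 : Real.exp (-a) * Real.exp (-(b - a)) = Real.exp (-b) := by
    rw [← Real.exp_add]; ring_nf
  have h4 : 0 < Real.exp (-a) := Real.exp_pos _
  nlinarith [mul_le_mul_of_nonneg_left h2 h4.le]

lemma inv_psi_diff {δ : ℝ} (hδ : 0 < δ) {h₁ h₂ : ℝ → ℝ} (hK₁ : MemK h₁) (hK₂ : MemK h₂)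
    {y : ℝ} (hy : 0 ≤ y) :
    |1 / Psi δ h₁ y - 1 / Psi δ h₂ y| ≤ δ * supNorm (h₁ - h₂) := by
  have p1 := psi_ge_one hδ hK₁ hy
  have p2 := psi_ge_one hδ hK₂ hy
  have key : 1 / Psi δ h₁ y - 1 / Psi δ h₂ y =
      δ * (h₂ y - h₁ y) / (Psi δ h₁ y * Psi δ h₂ y) := by
    field_simp
    unfold Psi; ring
  rw [key, abs_div, abs_mul]
  have hd : 1 ≤ |Psi δ h₁ y * Psi δ h₂ y| := by
    rw [abs_mul, abs_of_nonneg (by linarith), abs_of_nonneg (by linarith)]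
    nlinarith
  calc |δ| * |h₂ y - h₁ y| / |Psi δ h₁ y * Psi δ h₂ y|
      ≤ |δ| * |h₂ y - h₁ y| := div_le_self (by positivity) hd
    _ = δ * |h₁ y - h₂ y| := by rw [abs_of_pos hδ, abs_sub_comm]
    _ ≤ δ * supNorm (h₁ - h₂) := by
        have := sub_le_supNorm hK₁ hK₂ hy
        nlinarith

lemma A_diff {δ : ℝ} (hδ : 0 < δ) {h₁ h₂ : ℝ → ℝ} (hK₁ : MemK h₁) (hK₂ : MemK h₂)
    {η : ℝ} (hη : 0 ≤ η) :
    |(∫ ξ in (0:ℝ)..η, ξ / Psi δ h₁ ξ) - ∫ ξ in (0:ℝ)..η, ξ / Psi δ h₂ ξ| ≤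
      δ * supNorm (h₁ - h₂) * η ^ 2 / 2 := by
  have i1 := integrand_ii hδ hK₁ hη
  have i2 := integrand_ii hδ hK₂ hη
  rw [← intervalIntegral.integral_sub i1 i2]
  calc |∫ ξ in (0:ℝ)..η, (ξ / Psi δ h₁ ξ - ξ / Psi δ h₂ ξ)|
      ≤ ∫ ξ in (0:ℝ)..η, |ξ / Psi δ h₁ ξ - ξ / Psi δ h₂ ξ| :=
        intervalIntegral.abs_integral_le_integral_abs hη
    _ ≤ ∫ ξ in (0:ℝ)..η, δ * supNorm (h₁ - h₂) * ξ := by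
        apply intervalIntegral.integral_mono_on hη
        · exact (i1.sub i2).abs
        · apply Continuous.intervalIntegrable; fun_prop
        · intro ξ hξ
          have key : ξ / Psi δ h₁ ξ - ξ / Psi δ h₂ ξ =
              ξ * (1 / Psi δ h₁ ξ - 1 / Psi δ h₂ ξ) := by ring
          rw [key, abs_mul, abs_of_nonneg hξ.1, mul_comm (δ * supNorm (h₁ - h₂)) ξ]
          exact mul_le_mul_of_nonneg_left (inv_psi_diff hδ hK₁ hK₂ hξ.1) hξ.1
    _ = δ * supNorm (h₁ - h₂) * η ^ 2 / 2 := by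
        rw [intervalIntegral.integral_const_mul, integral_id]
        ring

lemma key_pointwise {δ : ℝ} (hδ : 0 < δ) {h₁ h₂ : ℝ → ℝ} (hK₁ : MemK h₁) (hK₂ : MemK h₂)
    {η : ℝ} (hη : 0 ≤ η) :
    |F δ h₁ η - F δ h₂ η| ≤
      δ * supNorm (h₁ - h₂) * (1 + η ^ 2) * Real.exp (-(η ^ 2 / (1 + δ))) := by
  set M := supNorm (h₁ - h₂) with hM
  have hM0 : 0 ≤ M := supNorm_nonneg hK₁ hK₂
  set A₁ := ∫ ξ in (0:ℝ)..η, ξ / Psi δ h₁ ξ with hA₁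
  set A₂ := ∫ ξ in (0:ℝ)..η, ξ / Psi δ h₂ ξ with hA₂
  have he : η ^ 2 / (1 + δ) = 2 * (η ^ 2 / (2 * (1 + δ))) := by
    field_simp
  have hc : η ^ 2 / (1 + δ) ≤ 2 * A₁ := by
    have := A_lower hδ hK₁ hη; rw [← hA₁] at this; linarith
  have hc2 : η ^ 2 / (1 + δ) ≤ 2 * A₂ := by
    have := A_lower hδ hK₂ hη; rw [← hA₂] at this; linarith
  have hE1 : Real.exp (-2 * A₁) ≤ Real.exp (-(η ^ 2 / (1 + δ))) :=
    Real.exp_le_exp.2 (by linarith)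
  have hdiffE : |Real.exp (-2 * A₁) - Real.exp (-2 * A₂)| ≤
      Real.exp (-(η ^ 2 / (1 + δ))) * (δ * M * η ^ 2) := by
    have h1 : |Real.exp (-(2 * A₁)) - Real.exp (-(2 * A₂))| ≤
        Real.exp (-(η ^ 2 / (1 + δ))) * |2 * A₁ - 2 * A₂| := abs_exp_sub_exp_le hc hc2
    have h2 : |2 * A₁ - 2 * A₂| ≤ δ * M * η ^ 2 := by
      have := A_diff hδ hK₁ hK₂ hη
      rw [← hA₁, ← hA₂, ← hM] at this
      calc |2 * A₁ - 2 * A₂| = 2 * |A₁ - A₂| := by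
            rw [show (2:ℝ) * A₁ - 2 * A₂ = 2 * (A₁ - A₂) by ring, abs_mul, abs_two]
        _ ≤ δ * M * η ^ 2 := by linarith [abs_nonneg (A₁ - A₂)]
    calc |Real.exp (-2 * A₁) - Real.exp (-2 * A₂)|
        = |Real.exp (-(2 * A₁)) - Real.exp (-(2 * A₂))| := by ring_nf
      _ ≤ Real.exp (-(η ^ 2 / (1 + δ))) * |2 * A₁ - 2 * A₂| := h1
      _ ≤ Real.exp (-(η ^ 2 / (1 + δ))) * (δ * M * η ^ 2) := by
          exact mul_le_mul_of_nonneg_left h2 (Real.exp_pos _).le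
  have hsplit : F δ h₁ η - F δ h₂ η =
      (1 / Psi δ h₁ η - 1 / Psi δ h₂ η) * Real.exp (-2 * A₁) +
        (1 / Psi δ h₂ η) * (Real.exp (-2 * A₁) - Real.exp (-2 * A₂)) := by
    unfold F; rw [← hA₁, ← hA₂]; ring
  have hψ2 : 1 / Psi δ h₂ η ≤ 1 := by
    have := psi_ge_one hδ hK₂ hη
    rw [div_le_one (by linarith)]; linarith
  have hψ2p : 0 ≤ 1 / Psi δ h₂ η := one_div_nonneg.2 (psi_pos hδ hK₂ hη).le
  calc |F δ h₁ η - F δ h₂ η|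
      ≤ |1 / Psi δ h₁ η - 1 / Psi δ h₂ η| * Real.exp (-2 * A₁) +
          (1 / Psi δ h₂ η) * |Real.exp (-2 * A₁) - Real.exp (-2 * A₂)| := by
        rw [hsplit]
        refine (abs_add_le _ _).trans ?_
        rw [abs_mul, abs_mul, abs_of_nonneg (Real.exp_pos _).le, abs_of_nonneg hψ2p]
    _ ≤ (δ * M) * Real.exp (-(η ^ 2 / (1 + δ))) +
          1 * (Real.exp (-(η ^ 2 / (1 + δ))) * (δ * M * η ^ 2)) := by
        exact add_le_add
          (mul_le_mul (inv_psi_diff hδ hK₁ hK₂ hη) hE1 (Real.exp_pos _).le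
            (mul_nonneg hδ.le hM0))
          (mul_le_mul hψ2 hdiffE (abs_nonneg _) zero_le_one)
    _ = δ * M * (1 + η ^ 2) * Real.exp (-(η ^ 2 / (1 + δ))) := by ring

lemma tendsto_mul_exp_neg_mul_sq {b : ℝ} (hb : 0 < b) :
    Tendsto (fun x : ℝ => x * Real.exp (-b * x ^ 2)) atTop (nhds 0) := by
  have h1 := rpow_mul_exp_neg_mul_sq_isLittleO_exp_neg hb 1
  have h2 : Tendsto (fun x : ℝ => Real.exp (-(1/2) * x)) atTop (nhds 0) := by
    rw [show (0:ℝ) = 0 from rfl]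
    apply Real.tendsto_exp_atBot.comp
    exact (tendsto_const_nhds.neg_mul_atTop (by norm_num) tendsto_id)
  have h3 := h1.tendsto_zero_of_tendsto h2
  refine h3.congr' ?_
  filter_upwards [eventually_ge_atTop (0:ℝ)] with x hx
  rw [Real.rpow_one]

lemma gauss_second_moment {b : ℝ} (hb : 0 < b) :
    ∫ x in Set.Ioi (0:ℝ), x ^ 2 * Real.exp (-b * x ^ 2) = Real.sqrt (π / b) / (4 * b) := by
  set f : ℝ → ℝ := fun x => -(2 * b)⁻¹ * (x * Real.exp (-b * x ^ 2)) with hf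
  have hderiv : ∀ x : ℝ, HasDerivAt f
      (x ^ 2 * Real.exp (-b * x ^ 2) - (2 * b)⁻¹ * Real.exp (-b * x ^ 2)) x := by
    intro x
    have h1 : HasDerivAt (fun x : ℝ => -b * x ^ 2) (-b * (2 * x)) x := by
      simpa using ((hasDerivAt_pow 2 x).const_mul (-b))
    have h2 : HasDerivAt (fun x : ℝ => Real.exp (-b * x ^ 2))
        (Real.exp (-b * x ^ 2) * (-b * (2 * x))) x := h1.exp
    have h3 := ((hasDerivAt_id x).mul h2).const_mul (-(2 * b)⁻¹)
    refine h3.congr_deriv ?_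
    field_simp
    simp only [id]
    ring
  have hint : IntegrableOn
      (fun x : ℝ => x ^ 2 * Real.exp (-b * x ^ 2) - (2 * b)⁻¹ * Real.exp (-b * x ^ 2))
      (Set.Ioi 0) := by
    refine Integrable.sub ?_ ?_
    · have := integrableOn_rpow_mul_exp_neg_mul_sq hb (s := 2) (by norm_num)
      refine this.congr_fun (fun x hx => ?_) measurableSet_Ioi
      rw [← Real.rpow_natCast x 2]; norm_num
    · exact ((integrable_exp_neg_mul_sq hb).const_mul _).integrableOn
  have htend : Tendsto f atTop (nhds 0) := by
    have := (tendsto_mul_exp_neg_mul_sq hb).const_mul (-(2 * b)⁻¹)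
    rw [mul_zero] at this
    exact this
  have key := MeasureTheory.integral_Ioi_of_hasDerivAt_of_tendsto
    (f := f) (a := 0) (m := 0)
    (hderiv 0).continuousAt.continuousWithinAt
    (fun x _ => hderiv x) hint htend
  have hf0 : f 0 = 0 := by simp [hf]
  rw [hf0, sub_zero] at key
  have hsplit : ∫ x in Set.Ioi (0:ℝ),
      (x ^ 2 * Real.exp (-b * x ^ 2) - (2 * b)⁻¹ * Real.exp (-b * x ^ 2)) =
      (∫ x in Set.Ioi (0:ℝ), x ^ 2 * Real.exp (-b * x ^ 2)) -
        (2 * b)⁻¹ * ∫ x in Set.Ioi (0:ℝ), Real.exp (-b * x ^ 2) := by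
    rw [MeasureTheory.integral_sub ?h1 ?h2, MeasureTheory.integral_const_mul]
    case h1 =>
      have := integrableOn_rpow_mul_exp_neg_mul_sq hb (s := 2) (by norm_num)
      refine this.congr_fun (fun x hx => ?_) measurableSet_Ioi
      rw [← Real.rpow_natCast x 2]; norm_num
    case h2 => exact ((integrable_exp_neg_mul_sq hb).const_mul _).integrableOn
  rw [hsplit, integral_gaussian_Ioi] at key
  have : (∫ x in Set.Ioi (0:ℝ), x ^ 2 * Real.exp (-b * x ^ 2)) =
      (2 * b)⁻¹ * (Real.sqrt (π / b) / 2) := by linarith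
  rw [this]
  ring

lemma F_contOn {δ : ℝ} (hδ : 0 < δ) {h : ℝ → ℝ} (hK : MemK h) {x : ℝ} (hx : 0 ≤ x) :
    ContinuousOn (F δ h) (Set.Icc 0 x) := by
  have contΨ : ContinuousOn (Psi δ h) (Set.Icc 0 x) := fun y hy =>
    (psi_contAt hK hy.1).continuousWithinAt
  have contA : ContinuousOn (fun η => ∫ ξ in (0:ℝ)..η, ξ / Psi δ h ξ) (Set.Icc 0 x) := by
    have := intervalIntegral.continuousOn_primitive_interval'
      (integrand_ii hδ hK hx) Set.left_mem_uIcc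
    rwa [Set.uIcc_of_le hx] at this
  have c1 : ContinuousOn (fun η => 1 / Psi δ h η) (Set.Icc 0 x) :=
    continuousOn_const.div contΨ (fun y hy => (psi_pos hδ hK hy.1).ne')
  have c2 : ContinuousOn (fun η => Real.exp (-2 * ∫ ξ in (0:ℝ)..η, ξ / Psi δ h ξ))
      (Set.Icc 0 x) :=
    Real.continuous_exp.comp_continuousOn (continuousOn_const.mul contA)
  exact c1.mul c2

theorem integral_abs_diff_bound (δ : ℝ) (hδ : 0 < δ)
    (h₁ h₂ : ℝ → ℝ) (hK₁ : MemK h₁) (hK₂ : MemK h₂) (x : ℝ) (hx : 0 ≤ x) :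
    ∫ η in (0:ℝ)..x, |F δ h₁ η - F δ h₂ η| ≤
      Real.sqrt π / 4 * δ * Real.sqrt (1 + δ) * (3 + δ) * supNorm (h₁ - h₂) := by
  set M := supNorm (h₁ - h₂) with hM
  have hM0 : 0 ≤ M := supNorm_nonneg hK₁ hK₂
  set b : ℝ := (1 + δ)⁻¹ with hb_def
  have hb : 0 < b := by positivity
  have harg : ∀ η : ℝ, -(η ^ 2 / (1 + δ)) = -b * η ^ 2 := by
    intro η; rw [hb_def]; ring
  set g : ℝ → ℝ := fun η => δ * M * (1 + η ^ 2) * Real.exp (-b * η ^ 2) with hg_def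
  -- integrability of g on Ioi 0
  have hIsq : IntegrableOn (fun η : ℝ => η ^ 2 * Real.exp (-b * η ^ 2)) (Set.Ioi 0) := by
    have := integrableOn_rpow_mul_exp_neg_mul_sq hb (s := 2) (by norm_num)
    refine this.congr_fun (fun y hy => ?_) measurableSet_Ioi
    rw [← Real.rpow_natCast y 2]; norm_num
  have hIexp : IntegrableOn (fun η : ℝ => Real.exp (-b * η ^ 2)) (Set.Ioi 0) :=
    (integrable_exp_neg_mul_sq hb).integrableOn
  have hIg : IntegrableOn g (Set.Ioi 0) := by
    have : IntegrableOn (fun η : ℝ =>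
        δ * M * (Real.exp (-b * η ^ 2) + η ^ 2 * Real.exp (-b * η ^ 2))) (Set.Ioi 0) :=
      (hIexp.add hIsq).const_mul _
    refine this.congr_fun (fun y _ => ?_) measurableSet_Ioi
    simp only [hg_def]; ring
  -- step 1 : interval integral ≤ interval integral of g
  have cont1 := F_contOn hδ hK₁ hx
  have cont2 := F_contOn hδ hK₂ hx
  have hii : IntervalIntegrable (fun η => |F δ h₁ η - F δ h₂ η|) volume 0 x := by
    apply ContinuousOn.intervalIntegrable
    rw [Set.uIcc_of_le hx]
    exact (cont1.sub cont2).abs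
  have hgii : IntervalIntegrable g volume 0 x := by
    apply Continuous.intervalIntegrable
    fun_prop
  have step1 : ∫ η in (0:ℝ)..x, |F δ h₁ η - F δ h₂ η| ≤ ∫ η in (0:ℝ)..x, g η := by
    apply intervalIntegral.integral_mono_on hx hii hgii
    intro η hη
    have := key_pointwise hδ hK₁ hK₂ hη.1
    rw [harg η] at this
    rw [← hM] at this
    simpa [hg_def] using this
  -- step 2 : interval integral of g ≤ integral over Ioi 0
  have step2 : ∫ η in (0:ℝ)..x, g η ≤ ∫ η in Set.Ioi (0:ℝ), g η := by
    rw [intervalIntegral.integral_of_le hx]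
    apply setIntegral_mono_set hIg
    · filter_upwards with y
      simp only [Pi.zero_apply, hg_def]
      positivity
    · filter_upwards with y hy
      exact Set.Ioc_subset_Ioi_self hy
  -- step 3 : compute the integral over Ioi 0
  have step3 : ∫ η in Set.Ioi (0:ℝ), g η =
      δ * M * (Real.sqrt (π / b) / 2 + Real.sqrt (π / b) / (4 * b)) := by
    have e1 : ∫ η in Set.Ioi (0:ℝ), g η =
        δ * M * ∫ η in Set.Ioi (0:ℝ),
          (Real.exp (-b * η ^ 2) + η ^ 2 * Real.exp (-b * η ^ 2)) := by
      rw [← MeasureTheory.integral_const_mul]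
      refine setIntegral_congr_fun measurableSet_Ioi (fun y _ => ?_)
      simp only [hg_def]; ring
    rw [e1, MeasureTheory.integral_add hIexp hIsq, integral_gaussian_Ioi,
      gauss_second_moment hb]
  -- put everything together
  have hsqrt : Real.sqrt (π / b) = Real.sqrt π * Real.sqrt (1 + δ) := by
    rw [hb_def, show π / (1 + δ)⁻¹ = π * (1 + δ) by field_simp, Real.sqrt_mul pi_pos.le]
  have final : δ * M * (Real.sqrt (π / b) / 2 + Real.sqrt (π / b) / (4 * b)) =
      Real.sqrt π / 4 * δ * Real.sqrt (1 + δ) * (3 + δ) * M := by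
    rw [hsqrt, hb_def]
    have h1δ : (1 + δ) ≠ 0 := by positivity
    field_simp
    ring
  calc ∫ η in (0:ℝ)..x, |F δ h₁ η - F δ h₂ η| ≤ ∫ η in (0:ℝ)..x, g η := step1
    _ ≤ ∫ η in Set.Ioi (0:ℝ), g η := step2
    _ = Real.sqrt π / 4 * δ * Real.sqrt (1 + δ) * (3 + δ) * M := by rw [step3, final]
end

section
/- Let δ > 0 and h₁, h₂ ∈ K, and set Ψ_{hᵢ}(x) = 1 + δ·hᵢ(x) and C_{hᵢ} = (∫₀^∞ (1/Ψ_{hᵢ}(η))·exp(−2∫₀^η ξ/Ψ_{hᵢ}(ξ) dξ) dη)^{−1}. Then |C_{h₁} − C_{h₂}| ≤ (1/√π) · δ · √(1+δ) · (1+δ)² · (3+δ) · ‖h₁ − h₂‖_∞. -/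
open Real MeasureTheory Filter

/-! Since `0 ≤ h ≤ 1`, `Ψ_h` takes values in `[1, 1 + δ]`, so the exponent `2Φ_h(η) = 2∫₀^η ξ/Ψ_h`
lies between `η²/(1 + δ)` and `η²`. The lower bound on the integrand `F` then gives
`Itot ≥ √π / (2(1 + δ))`. For the difference, `|Ψ_{h₁}⁻¹ - Ψ_{h₂}⁻¹| ≤ δ‖h₁ - h₂‖` together with
the `e^c`-Lipschitz bound for `exp` on `(-∞, c]`, `c = -η²/(1 + δ)`, gives
`|F_{h₁} - F_{h₂}| ≤ δ‖h₁ - h₂‖(1 + η²)e^{-η²/(1+δ)}`, a Gaussian moment integrating to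
`δ‖h₁ - h₂‖√π√(1 + δ)(3 + δ)/4`. Finally `|I₁⁻¹ - I₂⁻¹| ≤ |I₁ - I₂| / L²` for `I₁, I₂ ≥ L`. -/

open Set

lemma abs_exp_sub_exp_le_of_le {a b c : ℝ} (ha : a ≤ c) (hb : b ≤ c) :
    |exp a - exp b| ≤ exp c * |a - b| := by
  wlog hba : b ≤ a generalizing a b
  · rw [abs_sub_comm, abs_sub_comm a]
    exact this hb ha (le_of_not_ge hba)
  rw [abs_of_nonneg (sub_nonneg.2 (exp_le_exp.2 hba)), abs_of_nonneg (sub_nonneg.2 hba)]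
  have h_tangent : b - a + 1 ≤ exp (b - a) := add_one_le_exp _
  calc exp a - exp b = exp a * (1 - exp (b - a)) := by
        rw [mul_sub, mul_one, ← exp_add, add_sub_cancel]
    _ ≤ exp a * (a - b) := mul_le_mul_of_nonneg_left (by linarith) (exp_pos a).le
    _ ≤ exp c * (a - b) := mul_le_mul_of_nonneg_right (exp_le_exp.2 ha) (by linarith)

lemma abs_inv_sub_inv_le_of_le {a b L : ℝ} (hL : 0 < L) (ha : L ≤ a) (hb : L ≤ b) :
    |a⁻¹ - b⁻¹| ≤ |a - b| / L ^ 2 := by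
  have ha₀ := hL.trans_le ha
  have hb₀ := hL.trans_le hb
  rw [inv_sub_inv ha₀.ne' hb₀.ne', abs_div, abs_sub_comm, abs_of_pos (mul_pos ha₀ hb₀)]
  exact div_le_div_of_nonneg_left (abs_nonneg _) (by positivity) (by nlinarith)

lemma abs_le_supNorm {f : ℝ → ℝ} {B : ℝ} (hB : ∀ x ≥ 0, |f x| ≤ B) {x : ℝ} (hx : 0 ≤ x) :
    |f x| ≤ supNorm f :=
  le_ciSup (f := fun y : Ici (0 : ℝ) => |f y|) ⟨B, forall_mem_range.2 fun y => hB y y.2⟩ ⟨x, hx⟩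

section Gaussian

variable {a : ℝ}

lemma integrableOn_sq_mul_exp_neg_mul_sq (ha : 0 < a) :
    IntegrableOn (fun x : ℝ => x ^ 2 * exp (-a * x ^ 2)) (Ioi 0) := by
  simpa only [rpow_two] using integrableOn_rpow_mul_exp_neg_mul_sq ha (s := 2) (by norm_num)

lemma integral_sq_mul_exp_neg_mul_sq (ha : 0 < a) :
    ∫ x in Ioi (0 : ℝ), x ^ 2 * exp (-a * x ^ 2) = √(π / a) / (4 * a) := by
  have h := integral_rpow_mul_exp_neg_mul_rpow (p := 2) (q := 2) two_pos (by norm_num) ha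
  have hΓ : Gamma (3 / 2) = √π / 2 := by
    rw [show (3 / 2 : ℝ) = 1 / 2 + 1 by norm_num, Gamma_add_one (by norm_num),
      Gamma_one_half_eq]
    ring
  simp only [rpow_two] at h
  rw [h, show (-(2 + 1) / 2 : ℝ) = -1 - 1 / 2 by norm_num,
    show ((2 : ℝ) + 1) / 2 = 3 / 2 by norm_num, hΓ, rpow_sub ha, rpow_neg_one,
    sqrt_div' _ ha.le, ← sqrt_eq_rpow]
  field_simp
  ring

lemma integrableOn_one_add_sq_mul_exp_neg_mul_sq (ha : 0 < a) :
    IntegrableOn (fun x : ℝ => (1 + x ^ 2) * exp (-a * x ^ 2)) (Ioi 0) := by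
  refine ((integrable_exp_neg_mul_sq ha).integrableOn.add
    (integrableOn_sq_mul_exp_neg_mul_sq ha)).congr_fun (fun x _ => ?_) measurableSet_Ioi
  simp only [Pi.add_apply]
  ring

lemma integral_one_add_sq_mul_exp_neg_mul_sq (ha : 0 < a) :
    ∫ x in Ioi (0 : ℝ), (1 + x ^ 2) * exp (-a * x ^ 2) = √(π / a) * (2 * a + 1) / (4 * a) := by
  simp only [add_mul, one_mul]
  rw [integral_add (integrable_exp_neg_mul_sq ha).integrableOn
    (integrableOn_sq_mul_exp_neg_mul_sq ha), integral_gaussian_Ioi,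
    integral_sq_mul_exp_neg_mul_sq ha]
  field_simp
  ring

end Gaussian

section Psi

variable {δ : ℝ} {h : ℝ → ℝ} {x η : ℝ}

lemma one_le_Psi (hδ : 0 ≤ δ) (hx : h x ∈ Icc 0 1) : 1 ≤ Psi δ h x :=
  le_add_of_nonneg_right (mul_nonneg hδ hx.1)

lemma Psi_le (hδ : 0 ≤ δ) (hx : h x ∈ Icc 0 1) : Psi δ h x ≤ 1 + δ :=
  add_le_add le_rfl (mul_le_of_le_one_right hδ hx.2)

lemma Psi_pos (hδ : 0 ≤ δ) (hx : h x ∈ Icc 0 1) : 0 < Psi δ h x :=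
  one_pos.trans_le (one_le_Psi hδ hx)

noncomputable def Phi (δ : ℝ) (h : ℝ → ℝ) (η : ℝ) : ℝ := ∫ ξ in (0 : ℝ)..η, ξ / Psi δ h ξ

lemma F_eq (δ : ℝ) (h : ℝ → ℝ) (η : ℝ) :
    F δ h η = (Psi δ h η)⁻¹ * exp (-2 * Phi δ h η) := by
  rw [F, one_div, Phi]

lemma intervalIntegrable_id_div_Psi (hδ : 0 ≤ δ) (hh : MapsTo h (Ici 0) (Icc 0 1))
    (hc : ContinuousOn h (Ici 0)) {a b : ℝ} (ha : 0 ≤ a) (hb : 0 ≤ b) :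
    IntervalIntegrable (fun ξ => ξ / Psi δ h ξ) volume a b := by
  refine ContinuousOn.intervalIntegrable (ContinuousOn.mono ?_ (ordConnected_Ici.uIcc_subset ha hb))
  exact continuousOn_id.div (continuousOn_const.add (continuousOn_const.mul hc))
    fun x hx => (Psi_pos hδ (hh hx)).ne'

lemma inv_mul_sq_le_two_mul_Phi (hδ : 0 ≤ δ) (hh : MapsTo h (Ici 0) (Icc 0 1))
    (hc : ContinuousOn h (Ici 0)) (hη : 0 ≤ η) : (1 + δ)⁻¹ * η ^ 2 ≤ 2 * Phi δ h η := by
  have hle : ∫ ξ in (0 : ℝ)..η, ξ / (1 + δ) ≤ Phi δ h η :=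
    intervalIntegral.integral_mono_on hη ((continuous_id.div_const _).intervalIntegrable _ _)
      (intervalIntegrable_id_div_Psi hδ hh hc le_rfl hη) fun ξ hξ =>
        div_le_div_of_nonneg_left hξ.1 (Psi_pos hδ (hh hξ.1)) (Psi_le hδ (hh hξ.1))
  rw [intervalIntegral.integral_div, integral_id] at hle
  linarith [show (1 + δ)⁻¹ * η ^ 2 = 2 * ((η ^ 2 - 0 ^ 2) / 2 / (1 + δ)) by ring]

lemma two_mul_Phi_le_sq (hδ : 0 ≤ δ) (hh : MapsTo h (Ici 0) (Icc 0 1))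
    (hc : ContinuousOn h (Ici 0)) (hη : 0 ≤ η) : 2 * Phi δ h η ≤ η ^ 2 := by
  have hle : Phi δ h η ≤ ∫ ξ in (0 : ℝ)..η, ξ :=
    intervalIntegral.integral_mono_on hη (intervalIntegrable_id_div_Psi hδ hh hc le_rfl hη)
      (continuous_id.intervalIntegrable _ _) fun ξ hξ => div_le_self hξ.1 (one_le_Psi hδ (hh hξ.1))
  rw [integral_id] at hle
  linarith

lemma monotoneOn_Phi (hδ : 0 ≤ δ) (hh : MapsTo h (Ici 0) (Icc 0 1))
    (hc : ContinuousOn h (Ici 0)) : MonotoneOn (Phi δ h) (Ici 0) := by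
  intro a ha b hb hab
  rw [Phi, Phi, ← intervalIntegral.integral_add_adjacent_intervals
    (intervalIntegrable_id_div_Psi hδ hh hc le_rfl ha)
    (intervalIntegrable_id_div_Psi hδ hh hc ha hb)]
  refine le_add_of_nonneg_right (intervalIntegral.integral_nonneg hab fun ξ hξ => ?_)
  have hξ₀ : 0 ≤ ξ := ha.trans hξ.1
  exact div_nonneg hξ₀ (Psi_pos hδ (hh hξ₀)).le

lemma F_nonneg (hδ : 0 ≤ δ) (hη : h η ∈ Icc 0 1) : 0 ≤ F δ h η := by
  rw [F_eq]
  exact mul_nonneg (inv_nonneg.2 (Psi_pos hδ hη).le) (exp_pos _).le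

lemma F_le_exp (hδ : 0 ≤ δ) (hh : MapsTo h (Ici 0) (Icc 0 1))
    (hc : ContinuousOn h (Ici 0)) (hη : 0 ≤ η) :
    F δ h η ≤ exp (-(1 + δ)⁻¹ * η ^ 2) := by
  rw [F_eq]
  have hΦ := inv_mul_sq_le_two_mul_Phi hδ hh hc hη
  calc (Psi δ h η)⁻¹ * exp (-2 * Phi δ h η) ≤ 1 * exp (-(1 + δ)⁻¹ * η ^ 2) :=
        mul_le_mul (inv_le_one_of_one_le₀ (one_le_Psi hδ (hh hη))) (exp_le_exp.2 (by linarith))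
          (exp_pos _).le zero_le_one
    _ = exp (-(1 + δ)⁻¹ * η ^ 2) := one_mul _

lemma inv_mul_exp_le_F (hδ : 0 ≤ δ) (hh : MapsTo h (Ici 0) (Icc 0 1))
    (hc : ContinuousOn h (Ici 0)) (hη : 0 ≤ η) :
    (1 + δ)⁻¹ * exp (-1 * η ^ 2) ≤ F δ h η := by
  rw [F_eq]
  have hΦ := two_mul_Phi_le_sq hδ hh hc hη
  have hΨ := Psi_pos hδ (hh hη)
  exact mul_le_mul (inv_anti₀ hΨ (Psi_le hδ (hh hη))) (exp_le_exp.2 (by linarith))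
    (exp_pos _).le (inv_nonneg.2 hΨ.le)

lemma integrableOn_F (hδ : 0 ≤ δ) (hh : MapsTo h (Ici 0) (Icc 0 1))
    (hc : ContinuousOn h (Ici 0)) : IntegrableOn (F δ h) (Ioi 0) := by
  have hΦ : AEMeasurable (Phi δ h) (volume.restrict (Ioi 0)) :=
    aemeasurable_restrict_of_monotoneOn measurableSet_Ioi
      ((monotoneOn_Phi hδ hh hc).mono Ioi_subset_Ici_self)
  have hΨ : AEMeasurable (Psi δ h) (volume.restrict (Ioi 0)) :=
    ((continuousOn_const.add (continuousOn_const.mul hc)).mono Ioi_subset_Ici_self).aemeasurable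
      measurableSet_Ioi
  have hF : AEStronglyMeasurable (F δ h) (volume.restrict (Ioi 0)) := by
    simp_rw [funext (F_eq δ h)]
    exact (hΨ.inv.mul (measurable_exp.comp_aemeasurable (hΦ.const_mul _))).aestronglyMeasurable
  refine (integrable_exp_neg_mul_sq (inv_pos.2 (by linarith : 0 < 1 + δ))).integrableOn.mono' hF ?_
  filter_upwards [ae_restrict_mem measurableSet_Ioi] with η hη
  rw [Real.norm_eq_abs, abs_of_nonneg (F_nonneg hδ (hh (mem_Ici.2 (le_of_lt hη))))]
  exact F_le_exp hδ hh hc (le_of_lt hη)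

lemma sqrt_pi_div_le_Itot (hδ : 0 ≤ δ) (hh : MapsTo h (Ici 0) (Icc 0 1))
    (hc : ContinuousOn h (Ici 0)) :
    √π / (2 * (1 + δ)) ≤ Itot δ h :=
  calc √π / (2 * (1 + δ)) = ∫ x in Ioi (0 : ℝ), (1 + δ)⁻¹ * exp (-1 * x ^ 2) := by
        rw [integral_const_mul, integral_gaussian_Ioi, div_one]
        field_simp
    _ ≤ Itot δ h :=
        setIntegral_mono_on ((integrable_exp_neg_mul_sq one_pos).integrableOn.const_mul _)
          (integrableOn_F hδ hh hc) measurableSet_Ioi fun x hx =>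
            inv_mul_exp_le_F hδ hh hc (le_of_lt hx)

end Psi

section Difference

variable {δ : ℝ} {h₁ h₂ : ℝ → ℝ} {x η M : ℝ}

lemma abs_inv_Psi_sub_inv_Psi_le (hδ : 0 ≤ δ) (hx₁ : h₁ x ∈ Icc 0 1) (hx₂ : h₂ x ∈ Icc 0 1)
    (hM : |h₁ x - h₂ x| ≤ M) : |(Psi δ h₁ x)⁻¹ - (Psi δ h₂ x)⁻¹| ≤ δ * M :=
  calc |(Psi δ h₁ x)⁻¹ - (Psi δ h₂ x)⁻¹| ≤ |Psi δ h₁ x - Psi δ h₂ x| / 1 ^ 2 :=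
        abs_inv_sub_inv_le_of_le one_pos (one_le_Psi hδ hx₁) (one_le_Psi hδ hx₂)
    _ = δ * |h₁ x - h₂ x| := by
        rw [Psi, Psi, add_sub_add_left_eq_sub, ← mul_sub, abs_mul, abs_of_nonneg hδ, one_pow,
          div_one]
    _ ≤ δ * M := by gcongr

lemma abs_Phi_sub_Phi_le (hδ : 0 ≤ δ) (hh₁ : MapsTo h₁ (Ici 0) (Icc 0 1))
    (hc₁ : ContinuousOn h₁ (Ici 0)) (hh₂ : MapsTo h₂ (Ici 0) (Icc 0 1))
    (hc₂ : ContinuousOn h₂ (Ici 0)) (hM : ∀ x ≥ 0, |h₁ x - h₂ x| ≤ M) (hη : 0 ≤ η) :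
    |Phi δ h₁ η - Phi δ h₂ η| ≤ δ * M * η ^ 2 / 2 := by
  rw [Phi, Phi, ← intervalIntegral.integral_sub (intervalIntegrable_id_div_Psi hδ hh₁ hc₁ le_rfl hη)
    (intervalIntegrable_id_div_Psi hδ hh₂ hc₂ le_rfl hη)]
  calc |∫ ξ in (0 : ℝ)..η, (ξ / Psi δ h₁ ξ - ξ / Psi δ h₂ ξ)|
      ≤ ∫ ξ in (0 : ℝ)..η, δ * M * ξ := by
        rw [← Real.norm_eq_abs]
        refine intervalIntegral.norm_integral_le_of_norm_le hη
          (Eventually.of_forall fun ξ hξ => ?_)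
          ((continuous_const.mul continuous_id).intervalIntegrable _ _)
        have hξ₀ : 0 ≤ ξ := hξ.1.le
        rw [Real.norm_eq_abs, div_eq_mul_inv, div_eq_mul_inv, ← mul_sub, abs_mul,
          abs_of_nonneg hξ₀, mul_comm (δ * M)]
        exact mul_le_mul_of_nonneg_left
          (abs_inv_Psi_sub_inv_Psi_le hδ (hh₁ hξ₀) (hh₂ hξ₀) (hM ξ hξ₀)) hξ₀
    _ = δ * M * η ^ 2 / 2 := by
        rw [intervalIntegral.integral_const_mul, integral_id]
        ring

lemma abs_F_sub_F_le (hδ : 0 ≤ δ) (hh₁ : MapsTo h₁ (Ici 0) (Icc 0 1))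
    (hc₁ : ContinuousOn h₁ (Ici 0)) (hh₂ : MapsTo h₂ (Ici 0) (Icc 0 1))
    (hc₂ : ContinuousOn h₂ (Ici 0)) (hM : ∀ x ≥ 0, |h₁ x - h₂ x| ≤ M) (hη : 0 ≤ η) :
    |F δ h₁ η - F δ h₂ η| ≤ δ * M * ((1 + η ^ 2) * exp (-(1 + δ)⁻¹ * η ^ 2)) := by
  set g := exp (-(1 + δ)⁻¹ * η ^ 2)
  set E₁ := exp (-2 * Phi δ h₁ η)
  set E₂ := exp (-2 * Phi δ h₂ η)
  have hM₀ : 0 ≤ M := (abs_nonneg _).trans (hM 0 le_rfl)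
  have hΦ₁ := inv_mul_sq_le_two_mul_Phi hδ hh₁ hc₁ hη
  have hΦ₂ := inv_mul_sq_le_two_mul_Phi hδ hh₂ hc₂ hη
  have hΦ := abs_Phi_sub_Phi_le hδ hh₁ hc₁ hh₂ hc₂ hM hη
  have hE₁ : E₁ ≤ g := exp_le_exp.2 (by linarith)
  have hE : |E₁ - E₂| ≤ g * (δ * M * η ^ 2) :=
    calc |E₁ - E₂| ≤ g * |-2 * Phi δ h₁ η - -2 * Phi δ h₂ η| :=
          abs_exp_sub_exp_le_of_le (by linarith) (by linarith)
      _ = g * (2 * |Phi δ h₁ η - Phi δ h₂ η|) := by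
          rw [← mul_sub, abs_mul, abs_neg, abs_two]
      _ ≤ g * (δ * M * η ^ 2) := mul_le_mul_of_nonneg_left (by linarith) (exp_pos _).le
  rw [F_eq, F_eq]
  calc |(Psi δ h₁ η)⁻¹ * E₁ - (Psi δ h₂ η)⁻¹ * E₂|
      = |((Psi δ h₁ η)⁻¹ - (Psi δ h₂ η)⁻¹) * E₁ + (Psi δ h₂ η)⁻¹ * (E₁ - E₂)| := by ring_nf
    _ ≤ |(Psi δ h₁ η)⁻¹ - (Psi δ h₂ η)⁻¹| * E₁ + (Psi δ h₂ η)⁻¹ * |E₁ - E₂| := by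
        refine (abs_add_le _ _).trans_eq ?_
        rw [abs_mul, abs_mul, abs_of_pos (exp_pos _),
          abs_of_pos (inv_pos.2 (Psi_pos hδ (hh₂ hη)))]
    _ ≤ δ * M * g + 1 * (g * (δ * M * η ^ 2)) :=
        add_le_add
          (mul_le_mul (abs_inv_Psi_sub_inv_Psi_le hδ (hh₁ hη) (hh₂ hη) (hM η hη)) hE₁
            (exp_pos _).le (by positivity))
          (mul_le_mul (inv_le_one_of_one_le₀ (one_le_Psi hδ (hh₂ hη))) hE (abs_nonneg _)
            zero_le_one)
    _ = δ * M * ((1 + η ^ 2) * g) := by ring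

lemma abs_Itot_sub_Itot_le (hδ : 0 ≤ δ) (hh₁ : MapsTo h₁ (Ici 0) (Icc 0 1))
    (hc₁ : ContinuousOn h₁ (Ici 0)) (hh₂ : MapsTo h₂ (Ici 0) (Icc 0 1))
    (hc₂ : ContinuousOn h₂ (Ici 0)) (hM : ∀ x ≥ 0, |h₁ x - h₂ x| ≤ M) :
    |Itot δ h₁ - Itot δ h₂| ≤ δ * M * (√π * √(1 + δ) * (3 + δ) / 4) := by
  have hδ₁ : 0 < (1 + δ)⁻¹ := inv_pos.2 (by linarith)
  rw [Itot, Itot, ← integral_sub (integrableOn_F hδ hh₁ hc₁) (integrableOn_F hδ hh₂ hc₂),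
    ← Real.norm_eq_abs]
  calc ‖∫ η in Ioi (0 : ℝ), (F δ h₁ η - F δ h₂ η)‖
      ≤ ∫ η in Ioi (0 : ℝ), δ * M * ((1 + η ^ 2) * exp (-(1 + δ)⁻¹ * η ^ 2)) := by
        refine norm_integral_le_of_norm_le
          ((integrableOn_one_add_sq_mul_exp_neg_mul_sq hδ₁).const_mul _) ?_
        filter_upwards [ae_restrict_mem measurableSet_Ioi] with η hη
        exact abs_F_sub_F_le hδ hh₁ hc₁ hh₂ hc₂ hM (le_of_lt hη)
    _ = δ * M * (√π * √(1 + δ) * (3 + δ) / 4) := by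
        rw [integral_const_mul, integral_one_add_sq_mul_exp_neg_mul_sq hδ₁, div_inv_eq_mul,
          sqrt_mul pi_pos.le]
        field_simp
        ring

end Difference

theorem Ch_diff_bound (δ : ℝ) (hδ : 0 < δ)
    (h₁ h₂ : ℝ → ℝ) (hK₁ : MemK h₁) (hK₂ : MemK h₂) :
    |Ch δ h₁ - Ch δ h₂| ≤
      1 / Real.sqrt π * δ * Real.sqrt (1 + δ) * (1 + δ) ^ 2 * (3 + δ) *
        supNorm (h₁ - h₂) := by
  have hh₁ : MapsTo h₁ (Ici 0) (Icc 0 1) := fun x hx => hK₁.2.1 x hx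
  have hh₂ : MapsTo h₂ (Ici 0) (Icc 0 1) := fun x hx => hK₂.2.1 x hx
  have hc₁ := hK₁.1.continuousOn
  have hc₂ := hK₂.1.continuousOn
  have hM : ∀ x ≥ 0, |h₁ x - h₂ x| ≤ supNorm (h₁ - h₂) :=
    fun x => abs_le_supNorm fun y hy =>
      abs_sub_le_of_nonneg_of_le (hh₁ hy).1 (hh₁ hy).2 (hh₂ hy).1 (hh₂ hy).2
  calc |Ch δ h₁ - Ch δ h₂| ≤ |Itot δ h₁ - Itot δ h₂| / (√π / (2 * (1 + δ))) ^ 2 :=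
        abs_inv_sub_inv_le_of_le (by positivity) (sqrt_pi_div_le_Itot hδ.le hh₁ hc₁)
          (sqrt_pi_div_le_Itot hδ.le hh₂ hc₂)
    _ ≤ δ * supNorm (h₁ - h₂) * (√π * √(1 + δ) * (3 + δ) / 4) / (√π / (2 * (1 + δ))) ^ 2 := by
        gcongr
        exact abs_Itot_sub_Itot_le hδ.le hh₁ hc₁ hh₂ hc₂ hM
    _ = _ := by
        field_simp
        ring
end

section
/- Let δ > 0 and h ∈ K, and set Ψ_h(x) = 1 + δ·h(x) and C_h = (∫₀^∞ (1/Ψ_h(η))·exp(−2∫₀^η ξ/Ψ_h(ξ) dξ) dη)^{−1}. Then the constant C_h satisfies 2/√(π(1+δ)) ≤ C_h ≤ 2(1+δ)/√π. -/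
open Real MeasureTheory Filter

/-! Since `1 ≤ Ψ_h ≤ 1 + δ` on `[0, ∞)`, the inner integral `∫₀^η ξ / Ψ_h` lies between
`η² / (2(1 + δ))` and `η² / 2`, so the integrand of `C_h⁻¹` is squeezed between the Gaussians
`e^{-η²} / (1 + δ)` and `e^{-η² / (1 + δ)}`. Their integrals over `(0, ∞)` are
`√π / (2(1 + δ))` and `√(π(1 + δ)) / 2`; inverting gives the bounds on `C_h`. -/

open Set

noncomputable def weightedGaussian (ψ : ℝ → ℝ) (η : ℝ) : ℝ :=
  (1 / ψ η) * exp (-2 * ∫ ξ in (0:ℝ)..η, ξ / ψ ξ)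

section WeightedGaussian

variable {ψ : ℝ → ℝ} {m M : ℝ}

lemma continuousOn_id_div (hψ : ContinuousOn ψ (Ici 0)) (hpos : ∀ x, 0 ≤ x → 0 < ψ x) :
    ContinuousOn (fun ξ => ξ / ψ ξ) (Ici 0) :=
  continuousOn_id.div hψ fun x hx => (hpos x hx).ne'

lemma intervalIntegrable_id_div (hψ : ContinuousOn ψ (Ici 0)) (hpos : ∀ x, 0 ≤ x → 0 < ψ x)
    {η : ℝ} (hη : 0 ≤ η) : IntervalIntegrable (fun ξ => ξ / ψ ξ) volume 0 η :=
  ((continuousOn_id_div hψ hpos).mono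
    (by simp [uIcc_of_le hη, Icc_subset_Ici_self])).intervalIntegrable

lemma integral_id_div_le (hψ : ContinuousOn ψ (Ici 0)) (hm : 0 < m) (hmψ : ∀ x, 0 ≤ x → m ≤ ψ x)
    {η : ℝ} (hη : 0 ≤ η) : ∫ ξ in (0:ℝ)..η, ξ / ψ ξ ≤ η ^ 2 / (2 * m) := by
  have hpos : ∀ x, 0 ≤ x → 0 < ψ x := fun x hx => hm.trans_le (hmψ x hx)
  calc ∫ ξ in (0:ℝ)..η, ξ / ψ ξ ≤ ∫ ξ in (0:ℝ)..η, ξ / m :=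
        intervalIntegral.integral_mono_on hη (intervalIntegrable_id_div hψ hpos hη)
          (intervalIntegral.intervalIntegrable_id.div_const _)
          fun x hx => div_le_div_of_nonneg_left hx.1 hm (hmψ x hx.1)
    _ = η ^ 2 / (2 * m) := by
        rw [intervalIntegral.integral_div, integral_id]; ring

lemma le_integral_id_div (hψ : ContinuousOn ψ (Ici 0)) (hpos : ∀ x, 0 ≤ x → 0 < ψ x)
    (hψM : ∀ x, 0 ≤ x → ψ x ≤ M) {η : ℝ} (hη : 0 ≤ η) :
    η ^ 2 / (2 * M) ≤ ∫ ξ in (0:ℝ)..η, ξ / ψ ξ := by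
  calc η ^ 2 / (2 * M) = ∫ ξ in (0:ℝ)..η, ξ / M := by
        rw [intervalIntegral.integral_div, integral_id]; ring
    _ ≤ ∫ ξ in (0:ℝ)..η, ξ / ψ ξ :=
        intervalIntegral.integral_mono_on hη (intervalIntegral.intervalIntegrable_id.div_const _)
          (intervalIntegrable_id_div hψ hpos hη)
          fun x hx => div_le_div_of_nonneg_left hx.1 (hpos x hx.1) (hψM x hx.1)

lemma weightedGaussian_le (hψ : ContinuousOn ψ (Ici 0)) (hm : 0 < m)
    (hmψ : ∀ x, 0 ≤ x → m ≤ ψ x) (hψM : ∀ x, 0 ≤ x → ψ x ≤ M) {η : ℝ} (hη : 0 ≤ η) :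
    weightedGaussian ψ η ≤ exp (-(1 / M) * η ^ 2) / m := by
  have hpos : ∀ x, 0 ≤ x → 0 < ψ x := fun x hx => hm.trans_le (hmψ x hx)
  have hexp : exp (-2 * ∫ ξ in (0:ℝ)..η, ξ / ψ ξ) ≤ exp (-(1 / M) * η ^ 2) := by
    have := le_integral_id_div hψ hpos hψM hη
    rw [exp_le_exp]
    calc -2 * ∫ ξ in (0:ℝ)..η, ξ / ψ ξ ≤ -2 * (η ^ 2 / (2 * M)) := by linarith
      _ = -(1 / M) * η ^ 2 := by
        have : M ≠ 0 := (hpos 0 le_rfl |>.trans_le (hψM 0 le_rfl)).ne'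
        field_simp
  calc weightedGaussian ψ η ≤ (1 / m) * exp (-(1 / M) * η ^ 2) :=
        mul_le_mul (one_div_le_one_div_of_le hm (hmψ η hη)) hexp (exp_pos _).le (by positivity)
    _ = exp (-(1 / M) * η ^ 2) / m := by ring

lemma le_weightedGaussian (hψ : ContinuousOn ψ (Ici 0)) (hm : 0 < m)
    (hmψ : ∀ x, 0 ≤ x → m ≤ ψ x) (hψM : ∀ x, 0 ≤ x → ψ x ≤ M) {η : ℝ} (hη : 0 ≤ η) :
    exp (-(1 / m) * η ^ 2) / M ≤ weightedGaussian ψ η := by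
  have hpos : ∀ x, 0 ≤ x → 0 < ψ x := fun x hx => hm.trans_le (hmψ x hx)
  have hexp : exp (-(1 / m) * η ^ 2) ≤ exp (-2 * ∫ ξ in (0:ℝ)..η, ξ / ψ ξ) := by
    have := integral_id_div_le hψ hm hmψ hη
    rw [exp_le_exp]
    calc -(1 / m) * η ^ 2 = -2 * (η ^ 2 / (2 * m)) := by field_simp
      _ ≤ -2 * ∫ ξ in (0:ℝ)..η, ξ / ψ ξ := by linarith
  calc exp (-(1 / m) * η ^ 2) / M = (1 / M) * exp (-(1 / m) * η ^ 2) := by ring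
    _ ≤ weightedGaussian ψ η :=
        mul_le_mul (one_div_le_one_div_of_le (hpos η hη) (hψM η hη)) hexp (exp_pos _).le
          (one_div_pos.mpr (hpos η hη)).le

lemma continuousOn_weightedGaussian (hψ : ContinuousOn ψ (Ici 0))
    (hpos : ∀ x, 0 ≤ x → 0 < ψ x) : ContinuousOn (weightedGaussian ψ) (Ioi 0) := by
  have hg : ContinuousOn (fun ξ => ξ / ψ ξ) (Ioi 0) :=
    (continuousOn_id_div hψ hpos).mono Ioi_subset_Ici_self
  intro x (hx : 0 < x)
  have hprim : ContinuousAt (fun η => ∫ ξ in (0:ℝ)..η, ξ / ψ ξ) x :=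
    (intervalIntegral.integral_hasDerivAt_right (intervalIntegrable_id_div hψ hpos hx.le)
      (hg.stronglyMeasurableAtFilter isOpen_Ioi x hx)
      (hg.continuousAt (Ioi_mem_nhds hx))).continuousAt
  have hψx : ContinuousAt ψ x := (hψ.mono Ioi_subset_Ici_self).continuousAt (Ioi_mem_nhds hx)
  exact ((continuousAt_const.div hψx (hpos x hx.le).ne').mul
    (continuous_exp.continuousAt.comp (continuousAt_const.mul hprim))).continuousWithinAt

theorem integral_weightedGaussian_mem_Icc (hψ : ContinuousOn ψ (Ici 0)) (hm : 0 < m)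
    (hmψ : ∀ x, 0 ≤ x → m ≤ ψ x) (hψM : ∀ x, 0 ≤ x → ψ x ≤ M) :
    ∫ η in Ioi 0, weightedGaussian ψ η ∈ Icc (√(π * m) / (2 * M)) (√(π * M) / (2 * m)) := by
  have hpos : ∀ x, 0 ≤ x → 0 < ψ x := fun x hx => hm.trans_le (hmψ x hx)
  have hM : 0 < M := (hpos 0 le_rfl).trans_le (hψM 0 le_rfl)
  have hlow : IntegrableOn (fun η => exp (-(1 / m) * η ^ 2) / M) (Ioi 0) :=
    ((integrable_exp_neg_mul_sq (by positivity)).div_const _).integrableOn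
  have hup : IntegrableOn (fun η => exp (-(1 / M) * η ^ 2) / m) (Ioi 0) :=
    ((integrable_exp_neg_mul_sq (by positivity)).div_const _).integrableOn
  have hint : IntegrableOn (weightedGaussian ψ) (Ioi 0) := by
    refine hup.mono' ((continuousOn_weightedGaussian hψ hpos).aestronglyMeasurable
      measurableSet_Ioi) ?_
    filter_upwards [ae_restrict_mem measurableSet_Ioi] with η (hη : 0 < η)
    rw [norm_of_nonneg
      ((by positivity : (0:ℝ) ≤ _).trans (le_weightedGaussian hψ hm hmψ hψM hη.le))]
    exact weightedGaussian_le hψ hm hmψ hψM hη.le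
  constructor
  · calc √(π * m) / (2 * M) = ∫ η in Ioi 0, exp (-(1 / m) * η ^ 2) / M := by
          rw [integral_div, integral_gaussian_Ioi, one_div, div_inv_eq_mul, div_div]
      _ ≤ _ := setIntegral_mono_on hlow hint measurableSet_Ioi
          fun η hη => le_weightedGaussian hψ hm hmψ hψM (le_of_lt hη)
  · calc ∫ η in Ioi 0, weightedGaussian ψ η ≤ ∫ η in Ioi 0, exp (-(1 / M) * η ^ 2) / m :=
          setIntegral_mono_on hint hup measurableSet_Ioi
            fun η hη => weightedGaussian_le hψ hm hmψ hψM (le_of_lt hη)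
      _ = √(π * M) / (2 * m) := by
          rw [integral_div, integral_gaussian_Ioi, one_div, div_inv_eq_mul, div_div]

end WeightedGaussian

lemma Psi_mem_Icc {δ : ℝ} (hδ : 0 ≤ δ) {h : ℝ → ℝ} (hK : MemK h) {x : ℝ} (hx : 0 ≤ x) :
    Psi δ h x ∈ Icc 1 (1 + δ) := by
  obtain ⟨h0, h1⟩ := hK.2.1 x hx
  constructor <;> unfold Psi <;> nlinarith

lemma continuousOn_Psi (δ : ℝ) {h : ℝ → ℝ} (hK : MemK h) : ContinuousOn (Psi δ h) (Ici 0) :=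
  continuousOn_const.add (continuousOn_const.mul hK.1.continuousOn)

lemma Itot_eq_integral_weightedGaussian (δ : ℝ) (h : ℝ → ℝ) :
    Itot δ h = ∫ η in Ioi 0, weightedGaussian (Psi δ h) η :=
  rfl

theorem Ch_bounds (δ : ℝ) (hδ : 0 < δ) (h : ℝ → ℝ) (hK : MemK h) :
    2 / Real.sqrt (π * (1 + δ)) ≤ Ch δ h ∧ Ch δ h ≤ 2 * (1 + δ) / Real.sqrt π := by
  obtain ⟨hlow, hup⟩ : Itot δ h ∈ Icc (√π / (2 * (1 + δ))) (√(π * (1 + δ)) / 2) := by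
    rw [Itot_eq_integral_weightedGaussian]
    simpa only [mul_one] using integral_weightedGaussian_mem_Icc (continuousOn_Psi δ hK) one_pos
      (fun x hx => (Psi_mem_Icc hδ.le hK hx).1) (fun x hx => (Psi_mem_Icc hδ.le hK hx).2)
  have hItot : 0 < Itot δ h := lt_of_lt_of_le (by positivity) hlow
  constructor
  · simpa only [Ch, inv_div] using inv_anti₀ hItot hup
  · simpa only [Ch, inv_div] using inv_anti₀ (by positivity) hlow
end

section
/- Let δ > 0. For h ∈ K set Ψ_h(x) = 1 + δ·h(x), C_h = (∫₀^∞ (1/Ψ_h(η))·exp(−2∫₀^η ξ/Ψ_h(ξ) dξ) dη)^{−1}, and define τ(h)(x) = C_h ∫₀^x (1/Ψ_h(η))·exp(−2∫₀^η ξ/Ψ_h(ξ) dξ) dη for x ≥ 0. Then τ maps K into K: τ(h) is analytic on [0,∞), satisfies 0 ≤ τ(h)(x) ≤ 1 for all x ≥ 0, τ(h)(0) = 0, and τ(h)(x) → 1 as x → ∞. -/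
open Real MeasureTheory Filter

section Aux
open intervalIntegral

lemma analyticAt_primitive {g : ℝ → ℝ} {x₀ a : ℝ} (hg : AnalyticAt ℝ g x₀)
    (hint : IntervalIntegrable g volume a x₀) :
    AnalyticAt ℝ (fun x => ∫ t in a..x, g t) x₀ := by
  obtain ⟨p, r, hpr⟩ := hg
  obtain ⟨ε, hε0, hεr⟩ := ENNReal.lt_iff_exists_nnreal_btwn.mp hpr.r_pos
  have hε0' : 0 < (ε : ℝ) := by exact_mod_cast hε0
  set c : ℕ → ℝ := fun n => p.coeff n with hc
  have hsum : Summable fun n => |c n| * (ε : ℝ) ^ n := by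
    have := p.summable_norm_mul_pow (r := ε) (hεr.trans_le hpr.r_le)
    simpa [hc, FormalMultilinearSeries.norm_apply_eq_norm_coef, Real.norm_eq_abs] using this
  have hcont : ContinuousOn g (Metric.ball x₀ (ε : ℝ)) := by
    apply hpr.continuousOn.mono
    rw [← Metric.emetric_ball_nnreal]
    exact EMetric.ball_subset_ball hεr.le
  have claim : ∀ l u : ℝ, l ≤ u → |l| < ε → |u| < ε →
      HasSum (fun n => ∫ s in Set.Ioc l u, c n * s ^ n) (∫ s in Set.Ioc l u, g (x₀ + s)) := by
    intro l u hlu hl hu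
    have habs : ∀ s ∈ Set.Ioc l u, |s| < (ε : ℝ) := by
      intro s hs
      exact lt_of_le_of_lt (abs_le_max_abs_abs hs.1.le hs.2) (max_lt hl hu)
    have hFint : ∀ n : ℕ, IntegrableOn (fun s => c n * s ^ n) (Set.Ioc l u) volume := by
      intro n
      exact (continuous_const.mul (continuous_pow n)).integrableOn_Ioc
    have hμ : volume (Set.Ioc l u) < ⊤ := by
      rw [Real.volume_Ioc]; exact ENNReal.ofReal_lt_top
    have hnorm : ∀ n : ℕ, (∫ s in Set.Ioc l u, ‖c n * s ^ n‖) ≤ (|c n| * ε ^ n) * (2 * ε) := by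
      intro n
      have h1 : ‖∫ s in Set.Ioc l u, ‖c n * s ^ n‖‖ ≤
          (|c n| * ε ^ n) * (volume (Set.Ioc l u)).toReal := by
        apply norm_setIntegral_le_of_norm_le_const hμ
        intro s hs
        rw [norm_norm, norm_mul, Real.norm_eq_abs, Real.norm_eq_abs, abs_pow]
        exact mul_le_mul_of_nonneg_left
          (pow_le_pow_left₀ (abs_nonneg s) (habs s hs).le n) (abs_nonneg _)
      refine le_trans (le_abs_self _) (h1.trans ?_)
      apply mul_le_mul_of_nonneg_left _ (by positivity)
      rw [Real.volume_Ioc, ENNReal.toReal_ofReal (by linarith)]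
      have := (abs_le.mp hl.le).1
      have := (abs_le.mp hu.le).2
      linarith
    have hsummable : Summable fun n => ∫ s in Set.Ioc l u, ‖c n * s ^ n‖ := by
      refine Summable.of_nonneg_of_le (fun n => integral_nonneg fun s => norm_nonneg _)
        hnorm (hsum.mul_right _)
    have H := hasSum_integral_of_summable_integral_norm
      (μ := volume.restrict (Set.Ioc l u)) (F := fun n s => c n * s ^ n)
      (fun n => hFint n) hsummable
    have heq : Set.EqOn (fun s => ∑' n : ℕ, c n * s ^ n) (fun s => g (x₀ + s)) (Set.Ioc l u) := by
      intro s hs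
      have hmem : s ∈ Metric.eball (0 : ℝ) r := by
        rw [Metric.mem_eball, edist_zero_right]
        refine lt_trans ?_ hεr
        have h1 : ‖s‖₊ < ε := by
          rw [← NNReal.coe_lt_coe, coe_nnnorm, Real.norm_eq_abs]
          exact habs s hs
        exact_mod_cast h1
      have h2 := (hpr.hasSum hmem).tsum_eq
      simp only [FormalMultilinearSeries.apply_eq_pow_smul_coeff, smul_eq_mul] at h2
      simp only [← h2]
      exact tsum_congr fun n => mul_comm _ _
    have heq' : (∫ s in Set.Ioc l u, ∑' n : ℕ, c n * s ^ n) = ∫ s in Set.Ioc l u, g (x₀ + s) :=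
      setIntegral_congr_fun measurableSet_Ioc heq
    rw [← heq']
    exact H
  -- key: for |z| < ε, HasSum for the shifted primitive
  have key : ∀ z : ℝ, |z| < ε →
      HasSum (fun n => c n * z ^ (n + 1) / ((n : ℝ) + 1)) (∫ s in (0:ℝ)..z, g (x₀ + s)) := by
    intro z hz
    rcases le_or_gt 0 z with hz0 | hz0
    · have h0 : |(0:ℝ)| < ε := by simpa using hε0'
      have H := claim 0 z hz0 h0 hz
      have hval : ∀ n : ℕ, (∫ s in Set.Ioc (0:ℝ) z, c n * s ^ n) = c n * z ^ (n + 1) / ((n : ℝ) + 1) := by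
        intro n
        rw [← intervalIntegral.integral_of_le hz0, intervalIntegral.integral_const_mul,
          integral_pow]
        simp [mul_div_assoc]
      have hval2 : (∫ s in Set.Ioc (0:ℝ) z, g (x₀ + s)) = ∫ s in (0:ℝ)..z, g (x₀ + s) :=
        (intervalIntegral.integral_of_le hz0).symm
      rw [← hval2]
      exact H.congr_fun fun n => (hval n).symm
    · have h0 : |(0:ℝ)| < ε := by simpa using hε0'
      have H := (claim z 0 hz0.le hz h0).neg
      have hval : ∀ n : ℕ, -(∫ s in Set.Ioc z (0:ℝ), c n * s ^ n) = c n * z ^ (n + 1) / ((n : ℝ) + 1) := by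
        intro n
        rw [← intervalIntegral.integral_of_le hz0.le, ← intervalIntegral.integral_symm,
          intervalIntegral.integral_const_mul, integral_pow]
        simp [mul_div_assoc]
      have hval2 : -(∫ s in Set.Ioc z (0:ℝ), g (x₀ + s)) = ∫ s in (0:ℝ)..z, g (x₀ + s) := by
        rw [← intervalIntegral.integral_of_le hz0.le, ← intervalIntegral.integral_symm]
      rw [← hval2]
      exact H.congr_fun fun n => (hval n).symm
  set d : ℕ → ℝ := fun n => Nat.rec (∫ t in a..x₀, g t) (fun m _ => c m / ((m : ℝ) + 1)) n with hd
  refine ⟨FormalMultilinearSeries.ofScalars ℝ d, ?_⟩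
  rw [hasFPowerSeriesAt_iff, Metric.eventually_nhds_iff]
  refine ⟨ε, hε0', fun z hz => ?_⟩
  rw [dist_zero_right, Real.norm_eq_abs] at hz
  have hqco : ∀ n, (FormalMultilinearSeries.ofScalars ℝ d).coeff n = d n := by
    intro n
    rw [FormalMultilinearSeries.coeff]
    have h1 : (1 : Fin n → ℝ) = fun _ => (1:ℝ) := rfl
    rw [h1, FormalMultilinearSeries.ofScalars_apply_eq]
    simp
  simp only [hqco]
  have hint2 : IntervalIntegrable g volume x₀ (x₀ + z) := by
    apply ContinuousOn.intervalIntegrable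
    apply hcont.mono
    intro t ht
    rw [Metric.mem_ball, Real.dist_eq]
    have hza := abs_lt.mp hz
    rcases le_total 0 z with hz0 | hz0
    · rw [Set.uIcc_of_le (by linarith)] at ht
      have h1 := ht.1; have h2 := ht.2
      rw [abs_lt]; constructor <;> linarith
    · rw [Set.uIcc_of_ge (by linarith)] at ht
      have h1 := ht.1; have h2 := ht.2
      rw [abs_lt]; constructor <;> linarith
  have hsplit : (∫ t in a..(x₀ + z), g t) = (∫ t in a..x₀, g t) + ∫ s in (0:ℝ)..z, g (x₀ + s) := by
    have h3 : (∫ s in (0:ℝ)..z, g (x₀ + s)) = ∫ t in x₀..(x₀ + z), g t := by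
      have := intervalIntegral.integral_comp_add_left (a := (0:ℝ)) (b := z) (f := g) x₀
      simpa using this
    rw [h3, intervalIntegral.integral_add_adjacent_intervals hint hint2]
  have hkey := key z hz
  have hshift : HasSum (fun n => z ^ (n+1) • d (n+1)) (∫ s in (0:ℝ)..z, g (x₀ + s)) := by
    refine hkey.congr_fun fun n => ?_
    have hdn : d (n+1) = c n / ((n : ℝ) + 1) := rfl
    rw [hdn, smul_eq_mul]
    ring
  have hfin := (hasSum_nat_add_iff (f := fun n => z ^ n • d n) 1).mp hshift
  have hd0 : d 0 = ∫ t in a..x₀, g t := rfl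
  simp only [Finset.sum_range_one, pow_zero, one_smul, hd0] at hfin
  show HasSum (fun n => z ^ n • d n) (∫ t in a..(x₀ + z), g t)
  rw [hsplit, add_comm]
  exact hfin

section facts
variable {δ : ℝ} {h : ℝ → ℝ} (hδ : 0 < δ) (hK : MemK h)
include hδ hK

lemma psi_one_le : ∀ x ≥ (0:ℝ), 1 ≤ Psi δ h x := by
  intro x hx
  have := (hK.2.1 x hx).1
  unfold Psi; nlinarith

lemma psi_le_s9 : ∀ x ≥ (0:ℝ), Psi δ h x ≤ 1 + δ := by
  intro x hx
  have := (hK.2.1 x hx).2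
  unfold Psi; nlinarith

lemma psi_analyticAt : ∀ x ∈ Set.Ici (0:ℝ), AnalyticAt ℝ (Psi δ h) x := by
  intro x hx
  exact analyticAt_const.add (analyticAt_const.mul (hK.1 x hx))

lemma u_analyticAt : ∀ x ∈ Set.Ici (0:ℝ), AnalyticAt ℝ (fun ξ => ξ / Psi δ h ξ) x := by
  intro x hx
  exact analyticAt_id.div (psi_analyticAt hδ hK x hx)
    (by have := psi_one_le hδ hK x hx; linarith)

lemma u_intervalIntegrable : ∀ x ≥ (0:ℝ), IntervalIntegrable (fun ξ => ξ / Psi δ h ξ) volume 0 x := by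
  intro x hx
  apply ContinuousOn.intervalIntegrable
  intro t ht
  rw [Set.uIcc_of_le hx] at ht
  exact ((u_analyticAt hδ hK t ht.1).continuousAt).continuousWithinAt

lemma F_analyticAt : ∀ x ∈ Set.Ici (0:ℝ), AnalyticAt ℝ (F δ h) x := by
  intro x hx
  have hG : AnalyticAt ℝ (fun η => ∫ ξ in (0:ℝ)..η, ξ / Psi δ h ξ) x :=
    analyticAt_primitive (u_analyticAt hδ hK x hx) (u_intervalIntegrable hδ hK x hx)
  have h1 : AnalyticAt ℝ (fun η => 1 / Psi δ h η) x :=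
    analyticAt_const.div (psi_analyticAt hδ hK x hx)
      (by have := psi_one_le hδ hK x hx; linarith)
  exact h1.mul (analyticAt_rexp.comp (analyticAt_const.mul hG))

lemma F_pos : ∀ η ≥ (0:ℝ), 0 < F δ h η := by
  intro η hη
  have := psi_one_le hδ hK η hη
  unfold F
  positivity

lemma G_lower : ∀ η ≥ (0:ℝ), η ^ 2 / (2 * (1 + δ)) ≤ ∫ ξ in (0:ℝ)..η, ξ / Psi δ h ξ := by
  intro η hη
  have h1 : (∫ ξ in (0:ℝ)..η, ξ / (1 + δ)) ≤ ∫ ξ in (0:ℝ)..η, ξ / Psi δ h ξ := by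
    apply intervalIntegral.integral_mono_on hη
    · exact (continuous_id.div_const _).intervalIntegrable 0 η
    · exact u_intervalIntegrable hδ hK η hη
    · intro ξ hξ
      have hp1 := psi_one_le hδ hK ξ hξ.1
      have hp2 := psi_le_s9 hδ hK ξ hξ.1
      gcongr
      exact hξ.1
  have h2 : (∫ ξ in (0:ℝ)..η, ξ / (1 + δ)) = η ^ 2 / (2 * (1 + δ)) := by
    have ht1 : (1:ℝ) + δ ≠ 0 := by linarith
    rw [intervalIntegral.integral_div, integral_id]
    field_simp
    ring
  linarith

lemma F_le : ∀ η ≥ (0:ℝ), F δ h η ≤ rexp (-(1 / (1 + δ)) * η ^ 2) := by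
  intro η hη
  have hp1 := psi_one_le hδ hK η hη
  have hG := G_lower hδ hK η hη
  unfold F
  have h1 : 1 / Psi δ h η ≤ 1 := by
    rw [div_le_one (by linarith)]; linarith
  calc (1 / Psi δ h η) * rexp (-2 * ∫ ξ in (0:ℝ)..η, ξ / Psi δ h ξ)
      ≤ 1 * rexp (-2 * ∫ ξ in (0:ℝ)..η, ξ / Psi δ h ξ) := by
        apply mul_le_mul_of_nonneg_right h1 (Real.exp_nonneg _)
    _ ≤ rexp (-(1 / (1 + δ)) * η ^ 2) := by
        rw [one_mul, Real.exp_le_exp]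
        have ht1 : (0:ℝ) < 1 + δ := by linarith
        rw [div_le_iff₀ (by positivity)] at hG
        have e : (1 / (1 + δ)) * η ^ 2 ≤ 2 * ∫ ξ in (0:ℝ)..η, ξ / Psi δ h ξ := by
          rw [div_mul_eq_mul_div, one_mul, div_le_iff₀ ht1]
          nlinarith
        linarith

lemma F_contOn_s9 : ContinuousOn (F δ h) (Set.Ici 0) := fun x hx =>
  ((F_analyticAt hδ hK x hx).continuousAt).continuousWithinAt

lemma F_intervalIntegrable : ∀ x ≥ (0:ℝ), IntervalIntegrable (F δ h) volume 0 x := by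
  intro x hx
  apply ContinuousOn.intervalIntegrable
  apply (F_contOn_s9 hδ hK).mono
  rw [Set.uIcc_of_le hx]
  exact fun t ht => ht.1

lemma F_integrableOn : IntegrableOn (F δ h) (Set.Ioi 0) volume := by
  apply Integrable.mono' ((integrable_exp_neg_mul_sq (by positivity : (0:ℝ) < 1/(1+δ))).integrableOn)
  · exact ((F_contOn_s9 hδ hK).mono (fun t (ht : t ∈ Set.Ioi 0) => le_of_lt ht)).aestronglyMeasurable
      measurableSet_Ioi
  · filter_upwards [ae_restrict_mem measurableSet_Ioi] with η hη
    rw [Real.norm_eq_abs, abs_of_pos (F_pos hδ hK η (le_of_lt hη))]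
    exact F_le hδ hK η (le_of_lt hη)

lemma Itot_pos : 0 < Itot δ h := by
  unfold Itot
  rw [setIntegral_pos_iff_support_of_nonneg_ae]
  · have hsub : Set.Ioi (0:ℝ) ⊆ Function.support (F δ h) :=
      fun η hη => ne_of_gt (F_pos hδ hK η (le_of_lt hη))
    rw [Set.inter_eq_self_of_subset_right hsub]
    simp [Real.volume_Ioi]
  · filter_upwards [ae_restrict_mem measurableSet_Ioi] with η hη
    exact le_of_lt (F_pos hδ hK η (le_of_lt hη))
  · exact F_integrableOn hδ hK

end facts

end Aux

theorem tau_maps_K_into_K (δ : ℝ) (hδ : 0 < δ) (h : ℝ → ℝ) (hK : MemK h) :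
    MemK (fun x => Ch δ h * ∫ η in (0:ℝ)..x, F δ h η) := by
  have hIpos := Itot_pos hδ hK
  have hCpos : 0 < Ch δ h := by unfold Ch; positivity
  have hCI : Ch δ h * Itot δ h = 1 := inv_mul_cancel₀ (ne_of_gt hIpos)
  refine ⟨?_, ?_, ?_, ?_⟩
  · intro x hx
    exact analyticAt_const.mul
      (analyticAt_primitive (F_analyticAt hδ hK x hx) (F_intervalIntegrable hδ hK x hx))
  · intro x hx
    constructor
    · apply mul_nonneg hCpos.le
      apply intervalIntegral.integral_nonneg hx
      exact fun u hu => le_of_lt (F_pos hδ hK u hu.1)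
    · have h1 : (∫ η in (0:ℝ)..x, F δ h η) ≤ Itot δ h := by
        rw [intervalIntegral.integral_of_le hx]
        unfold Itot
        apply setIntegral_mono_set (F_integrableOn hδ hK)
        · filter_upwards [ae_restrict_mem measurableSet_Ioi] with η hη
          exact le_of_lt (F_pos hδ hK η (le_of_lt hη))
        · exact HasSubset.Subset.eventuallyLE Set.Ioc_subset_Ioi_self
      calc Ch δ h * ∫ η in (0:ℝ)..x, F δ h η ≤ Ch δ h * Itot δ h := by
            exact mul_le_mul_of_nonneg_left h1 hCpos.le
        _ = 1 := hCI
  · simp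
  · have h1 := intervalIntegral_tendsto_integral_Ioi 0 (F_integrableOn hδ hK) tendsto_id
    have h2 := h1.const_mul (Ch δ h)
    have h3 : Ch δ h * (∫ x in Set.Ioi (0:ℝ), F δ h x) = 1 := hCI
    rw [h3] at h2
    exact h2
end

section
/- Let δ > 0 and h₁, h₂ ∈ K, and define τ(hᵢ)(x) = C_{hᵢ} ∫₀^x (1/Ψ_{hᵢ}(η))·exp(−2∫₀^η ξ/Ψ_{hᵢ}(ξ) dξ) dη with Ψ_{hᵢ}(x) = 1 + δ·hᵢ(x) and C_{hᵢ} = (∫₀^∞ (1/Ψ_{hᵢ}(η))·exp(−2∫₀^η ξ/Ψ_{hᵢ}(ξ) dξ) dη)^{−1}. Then ‖τ(h₁) − τ(h₂)‖_∞ ≤ g(δ)·‖h₁ − h₂‖_∞, where g(δ) = (δ/2)·(1+δ)^{3/2}·(3+δ)·[1 + (1+δ)^{3/2}]. -/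
open Real MeasureTheory Filter

namespace TauAux

open Set intervalIntegral

/-! ### Gaussian integral of `x^2 * exp (-b x^2)` -/

lemma rpow_two_eq (x : ℝ) : x ^ (2:ℝ) = x ^ (2:ℕ) := by
  rw [show (2:ℝ) = ((2:ℕ):ℝ) by norm_num, Real.rpow_natCast]

lemma int_sq_gauss {b : ℝ} (hb : 0 < b) :
    IntegrableOn (fun x : ℝ => x ^ 2 * Real.exp (-b * x ^ 2)) (Ioi 0) := by
  have := integrableOn_rpow_mul_exp_neg_mul_sq hb (s := 2) (by norm_num)
  apply this.congr_fun ?_ measurableSet_Ioi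
  intro x hx
  simp [rpow_two_eq]

lemma gauss2 {b : ℝ} (hb : 0 < b) :
    ∫ x in Ioi (0:ℝ), x ^ 2 * Real.exp (-b * x ^ 2) = √(π / b) / (4 * b) := by
  have hint : IntegrableOn
      (fun x : ℝ => x ^ 2 * Real.exp (-b * x ^ 2) - Real.exp (-b * x ^ 2) / (2 * b)) (Ioi 0) :=
    (int_sq_gauss hb).sub (((integrable_exp_neg_mul_sq hb).div_const _).integrableOn)
  have key : ∫ x in Ioi (0:ℝ),
      (x ^ 2 * Real.exp (-b * x ^ 2) - Real.exp (-b * x ^ 2) / (2 * b)) = 0 := by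
    have hderiv : ∀ x ∈ Ici (0:ℝ), HasDerivAt (fun x : ℝ => -x * Real.exp (-b * x ^ 2) / (2 * b))
        (x ^ 2 * Real.exp (-b * x ^ 2) - Real.exp (-b * x ^ 2) / (2 * b)) x := by
      intro x _
      have h1 : HasDerivAt (fun x : ℝ => -b * x ^ 2) (-b * (2 * x)) x := by
        simpa using ((hasDerivAt_pow 2 x).const_mul (-b))
      have h2 : HasDerivAt (fun x : ℝ => Real.exp (-b * x ^ 2))
          (Real.exp (-b * x ^ 2) * (-b * (2 * x))) x := h1.exp
      have h3 : HasDerivAt (fun x : ℝ => -x * Real.exp (-b * x ^ 2) / (2 * b))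
          (((-1) * Real.exp (-b * x ^ 2) + (-x) * (Real.exp (-b * x ^ 2) * (-b * (2 * x)))) /
            (2 * b)) x := ((hasDerivAt_neg x).mul h2).div_const _
      convert h3 using 1
      field_simp
      ring
    have htend : Tendsto (fun x : ℝ => -x * Real.exp (-b * x ^ 2) / (2 * b)) atTop (nhds 0) := by
      have hhalf : Tendsto (fun x : ℝ => Real.exp (-(1/2) * x)) atTop (nhds 0) := by
        have h1 : Tendsto (fun x : ℝ => (1/2 : ℝ) * x) atTop atTop :=
          tendsto_id.const_mul_atTop (by norm_num)
        have h2 : Tendsto (fun x : ℝ => -((1/2:ℝ) * x)) atTop atBot :=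
          tendsto_neg_atTop_atBot.comp h1
        have h3 := Real.tendsto_exp_atBot.comp h2
        apply h3.congr; intro x; simp [Function.comp, neg_mul]
      have h0 : Tendsto (fun x : ℝ => x ^ (1:ℝ) * Real.exp (-b * x ^ 2)) atTop (nhds 0) :=
        Asymptotics.IsLittleO.trans_tendsto (rpow_mul_exp_neg_mul_sq_isLittleO_exp_neg hb 1) hhalf
      have : Tendsto (fun x : ℝ => -(x ^ (1:ℝ) * Real.exp (-b * x ^ 2)) / (2 * b)) atTop
          (nhds 0) := by simpa using (h0.neg.div_const (2*b))
      apply this.congr' ?_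
      filter_upwards [eventually_ge_atTop (0:ℝ)] with x hx
      rw [Real.rpow_one]; ring
    have := integral_Ioi_of_hasDerivAt_of_tendsto' hderiv hint htend
    simpa using this
  have hsplit := integral_sub (int_sq_gauss hb)
    (((integrable_exp_neg_mul_sq hb).div_const (2*b)).integrableOn)
  rw [hsplit] at key
  have hg : ∫ x in Ioi (0:ℝ), Real.exp (-b * x ^ 2) / (2*b) = √(π / b) / 2 / (2*b) := by
    rw [MeasureTheory.integral_div, integral_gaussian_Ioi]
  have heq : ∫ x in Ioi (0:ℝ), x ^ 2 * Real.exp (-b * x ^ 2) = √(π / b) / 2 / (2*b) := by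
    rw [← hg]; linarith
  rw [heq]; ring

/-! ### Basic estimates for `Psi`, the primitive `A` and `F` -/

variable {δ : ℝ} {h h₁ h₂ : ℝ → ℝ}

/-- Abbreviation for the inner primitive. -/
noncomputable def A (δ : ℝ) (h : ℝ → ℝ) (η : ℝ) : ℝ := ∫ ξ in (0:ℝ)..η, ξ / Psi δ h ξ

lemma F_eq (δ : ℝ) (h : ℝ → ℝ) (η : ℝ) :
    F δ h η = (1 / Psi δ h η) * Real.exp (-2 * A δ h η) := rfl

section basic

variable (hδ : 0 < δ) (hb : ∀ x ≥ (0:ℝ), 0 ≤ h x ∧ h x ≤ 1) (hc : ContinuousOn h (Ici 0))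

include hδ hb

lemma Psi_ge {x : ℝ} (hx : 0 ≤ x) : 1 ≤ Psi δ h x := by
  have := (hb x hx).1
  have : 0 ≤ δ * h x := mul_nonneg hδ.le this
  simp only [Psi]; linarith

lemma Psi_le {x : ℝ} (hx : 0 ≤ x) : Psi δ h x ≤ 1 + δ := by
  have := (hb x hx).2
  have := mul_le_mul_of_nonneg_left this hδ.le
  simp only [Psi]; linarith

lemma Psi_pos {x : ℝ} (hx : 0 ≤ x) : 0 < Psi δ h x :=
  lt_of_lt_of_le one_pos (Psi_ge hδ hb hx)

include hc

lemma contPsi : ContinuousOn (Psi δ h) (Ici 0) :=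
  continuousOn_const.add (continuousOn_const.mul hc)

lemma contRatio : ContinuousOn (fun ξ => ξ / Psi δ h ξ) (Ici 0) :=
  continuousOn_id.div (contPsi hδ hb hc) (fun x hx => (Psi_pos hδ hb hx).ne')

lemma ratio_ii {η : ℝ} (hη : 0 ≤ η) :
    IntervalIntegrable (fun ξ => ξ / Psi δ h ξ) volume 0 η :=
  ((contRatio hδ hb hc).mono (by rw [uIcc_of_le hη]; exact Icc_subset_Ici_self)).intervalIntegrable

lemma A_le {η : ℝ} (hη : 0 ≤ η) : A δ h η ≤ η ^ 2 / 2 := by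
  have h1 : ∫ ξ in (0:ℝ)..η, ξ / Psi δ h ξ ≤ ∫ ξ in (0:ℝ)..η, ξ := by
    apply intervalIntegral.integral_mono_on hη (ratio_ii hδ hb hc hη)
      (continuous_id.intervalIntegrable 0 η)
    intro ξ hξ
    exact div_le_self hξ.1 (Psi_ge hδ hb hξ.1)
  have h2 : ∫ ξ in (0:ℝ)..η, ξ = η ^ 2 / 2 := by
    rw [integral_id]; ring
  rw [A]; linarith

lemma A_ge {η : ℝ} (hη : 0 ≤ η) : η ^ 2 / 2 / (1 + δ) ≤ A δ h η := by
  have h1 : ∫ ξ in (0:ℝ)..η, ξ / (1 + δ) ≤ ∫ ξ in (0:ℝ)..η, ξ / Psi δ h ξ := by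
    apply intervalIntegral.integral_mono_on hη
      ((continuous_id.div_const _).intervalIntegrable 0 η) (ratio_ii hδ hb hc hη)
    intro ξ hξ
    apply div_le_div_of_nonneg_left hξ.1 (Psi_pos hδ hb hξ.1) (Psi_le hδ hb hξ.1)
  have h2 : ∫ ξ in (0:ℝ)..η, ξ / (1 + δ) = η ^ 2 / 2 / (1 + δ) := by
    rw [intervalIntegral.integral_div, integral_id]; ring
  rw [A]; linarith

lemma F_pos {η : ℝ} (hη : 0 ≤ η) : 0 < F δ h η := by
  rw [F_eq]
  exact mul_pos (div_pos one_pos (Psi_pos hδ hb hη)) (Real.exp_pos _)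

lemma F_le {η : ℝ} (hη : 0 ≤ η) : F δ h η ≤ Real.exp (-(1 + δ)⁻¹ * η ^ 2) := by
  rw [F_eq]
  have h1 : 1 / Psi δ h η ≤ 1 := by
    rw [div_le_one (Psi_pos hδ hb hη)]; exact Psi_ge hδ hb hη
  have h2 : Real.exp (-2 * A δ h η) ≤ Real.exp (-(1 + δ)⁻¹ * η ^ 2) := by
    apply Real.exp_le_exp.mpr
    have hA := A_ge hδ hb hc hη
    have he : (1 + δ)⁻¹ * η ^ 2 = 2 * (η ^ 2 / 2 / (1 + δ)) := by
      field_simp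
    nlinarith
  calc (1 / Psi δ h η) * Real.exp (-2 * A δ h η)
      ≤ 1 * Real.exp (-(1 + δ)⁻¹ * η ^ 2) :=
        mul_le_mul h1 h2 (Real.exp_pos _).le zero_le_one
    _ = Real.exp (-(1 + δ)⁻¹ * η ^ 2) := one_mul _

lemma F_ge {η : ℝ} (hη : 0 ≤ η) : (1 + δ)⁻¹ * Real.exp (-1 * η ^ 2) ≤ F δ h η := by
  rw [F_eq]
  have h1 : (1 + δ)⁻¹ ≤ 1 / Psi δ h η := by
    rw [one_div]
    exact inv_anti₀ (Psi_pos hδ hb hη) (Psi_le hδ hb hη)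
  have h2 : Real.exp (-1 * η ^ 2) ≤ Real.exp (-2 * A δ h η) := by
    apply Real.exp_le_exp.mpr
    have hA := A_le hδ hb hc hη
    nlinarith
  exact mul_le_mul h1 h2 (Real.exp_pos _).le (div_pos one_pos (Psi_pos hδ hb hη)).le

lemma A_contOn : ContinuousOn (A δ h) (Ici 0) := by
  intro η₀ hη₀
  have hη₀' : (0:ℝ) ≤ η₀ := hη₀
  have hIcc : uIcc (0:ℝ) (η₀+1) = Icc 0 (η₀+1) := uIcc_of_le (by linarith)
  have hint : IntegrableOn (fun ξ => ξ / Psi δ h ξ) (uIcc 0 (η₀+1)) := by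
    rw [hIcc]
    exact ((contRatio hδ hb hc).mono Icc_subset_Ici_self).integrableOn_Icc
  have hcont := intervalIntegral.continuousOn_primitive_interval hint
  have hmem : uIcc (0:ℝ) (η₀+1) ∈ nhdsWithin η₀ (Ici 0) := by
    rw [hIcc, ← Ici_inter_Iic]
    exact Filter.inter_mem self_mem_nhdsWithin
      (mem_nhdsWithin_of_mem_nhds (Iic_mem_nhds (by linarith)))
  exact (hcont η₀ (by rw [hIcc]; exact ⟨hη₀', by linarith⟩)).mono_of_mem_nhdsWithin hmem

lemma F_contOn : ContinuousOn (F δ h) (Ici 0) := by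
  have h1 : ContinuousOn (fun η => 1 / Psi δ h η) (Ici 0) :=
    continuousOn_const.div (contPsi hδ hb hc) (fun x hx => (Psi_pos hδ hb hx).ne')
  have h2 : ContinuousOn (fun η => Real.exp (-2 * A δ h η)) (Ici 0) :=
    Real.continuous_exp.comp_continuousOn (continuousOn_const.mul (A_contOn hδ hb hc))
  exact h1.mul h2

lemma F_intOn : IntegrableOn (F δ h) (Ioi 0) := by
  have hb' : (0:ℝ) < (1+δ)⁻¹ := by positivity
  apply Integrable.mono' ((integrable_exp_neg_mul_sq hb').integrableOn)
  · exact ((F_contOn hδ hb hc).mono Ioi_subset_Ici_self).aestronglyMeasurable measurableSet_Ioi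
  · rw [ae_restrict_iff' measurableSet_Ioi]
    apply ae_of_all
    intro x hx
    rw [Real.norm_eq_abs, abs_of_pos (F_pos hδ hb hc (le_of_lt hx))]
    exact F_le hδ hb hc (le_of_lt hx)

lemma Itot_le : Itot δ h ≤ √π * √(1+δ) / 2 := by
  have hbpos : (0:ℝ) < (1+δ)⁻¹ := by positivity
  have h1 : Itot δ h ≤ ∫ η in Ioi (0:ℝ), Real.exp (-(1+δ)⁻¹ * η^2) := by
    apply setIntegral_mono_on (F_intOn hδ hb hc)
      ((integrable_exp_neg_mul_sq hbpos).integrableOn) measurableSet_Ioi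
    intro x hx; exact F_le hδ hb hc (le_of_lt hx)
  rw [integral_gaussian_Ioi] at h1
  have he : π / (1+δ)⁻¹ = π * (1+δ) := by field_simp
  rw [he, Real.sqrt_mul pi_pos.le] at h1
  linarith

lemma Itot_ge : √π / (2*(1+δ)) ≤ Itot δ h := by
  have h1 : ∫ η in Ioi (0:ℝ), (1+δ)⁻¹ * Real.exp (-1 * η^2) ≤ Itot δ h := by
    apply setIntegral_mono_on
      (((integrable_exp_neg_mul_sq (by norm_num : (0:ℝ) < 1)).const_mul _).integrableOn)
      (F_intOn hδ hb hc) measurableSet_Ioi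
    intro x hx; exact F_ge hδ hb hc (le_of_lt hx)
  rw [MeasureTheory.integral_const_mul, integral_gaussian_Ioi, div_one] at h1
  have : (1+δ)⁻¹ * (√π / 2) = √π / (2*(1+δ)) := by rw [inv_mul_eq_div, div_div]
  linarith [this ▸ h1]

lemma Itot_pos : 0 < Itot δ h :=
  lt_of_lt_of_le (by positivity) (Itot_ge hδ hb hc)

lemma Ch_pos : 0 < Ch δ h := inv_pos.mpr (Itot_pos hδ hb hc)

lemma Ch_le : Ch δ h ≤ 2*(1+δ)/√π := by
  have h1 : (Itot δ h)⁻¹ ≤ (√π / (2*(1+δ)))⁻¹ :=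
    inv_anti₀ (by positivity) (Itot_ge hδ hb hc)
  rw [inv_div] at h1
  exact h1

end basic

/-! ### Difference estimates -/

lemma exp_contraction {a b c : ℝ} (ha : c ≤ a) (hb : c ≤ b) :
    |Real.exp (-a) - Real.exp (-b)| ≤ Real.exp (-c) * |a - b| := by
  have main : ∀ a b : ℝ, c ≤ a → c ≤ b → a ≤ b →
      Real.exp (-a) - Real.exp (-b) ≤ Real.exp (-c) * (b - a) := by
    intro a b ha hb hab
    have h1 := Real.add_one_le_exp (a - b)
    have h2 : Real.exp (-b) = Real.exp (-a) * Real.exp (a - b) := by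
      rw [← Real.exp_add]; ring_nf
    have h3 : Real.exp (-a) ≤ Real.exp (-c) := Real.exp_le_exp.mpr (by linarith)
    have h4 : Real.exp (-a) * (1 - Real.exp (a - b)) ≤ Real.exp (-a) * (b - a) :=
      mul_le_mul_of_nonneg_left (by linarith) (Real.exp_pos _).le
    have h5 : Real.exp (-a) * (b - a) ≤ Real.exp (-c) * (b - a) :=
      mul_le_mul_of_nonneg_right h3 (by linarith)
    nlinarith
  rcases le_total a b with hab | hab
  · rw [abs_of_nonneg (sub_nonneg.mpr (Real.exp_le_exp.mpr (by linarith))),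
      abs_of_nonpos (by linarith), neg_sub]
    exact main a b ha hb hab
  · rw [abs_of_nonpos (sub_nonpos.mpr (Real.exp_le_exp.mpr (by linarith))),
      abs_of_nonneg (by linarith), neg_sub]
    exact main b a hb ha hab

section diff

variable {M : ℝ} (hδ : 0 < δ)
  (hb₁ : ∀ x ≥ (0:ℝ), 0 ≤ h₁ x ∧ h₁ x ≤ 1) (hc₁ : ContinuousOn h₁ (Ici 0))
  (hb₂ : ∀ x ≥ (0:ℝ), 0 ≤ h₂ x ∧ h₂ x ≤ 1) (hc₂ : ContinuousOn h₂ (Ici 0))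
  (hM : ∀ x ≥ (0:ℝ), |h₁ x - h₂ x| ≤ M)

include hδ hb₁ hb₂ hM

lemma M_nonneg : 0 ≤ M := le_trans (abs_nonneg _) (hM 0 le_rfl)

lemma inv_Psi_diff {η : ℝ} (hη : 0 ≤ η) :
    |1 / Psi δ h₁ η - 1 / Psi δ h₂ η| ≤ δ * M := by
  have p1 := Psi_pos hδ hb₁ hη
  have p2 := Psi_pos hδ hb₂ hη
  have g1 := Psi_ge hδ hb₁ hη
  have g2 := Psi_ge hδ hb₂ hη
  have e : 1 / Psi δ h₁ η - 1 / Psi δ h₂ η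
      = (δ * (h₂ η - h₁ η)) / (Psi δ h₁ η * Psi δ h₂ η) := by
    rw [div_sub_div _ _ p1.ne' p2.ne']
    congr 1
    simp [Psi]; ring
  rw [e, abs_div]
  have hnum : |δ * (h₂ η - h₁ η)| ≤ δ * M := by
    rw [abs_mul, abs_of_pos hδ, abs_sub_comm]
    exact mul_le_mul_of_nonneg_left (hM η hη) hδ.le
  have hden : 1 ≤ |Psi δ h₁ η * Psi δ h₂ η| := by
    rw [abs_of_pos (mul_pos p1 p2)]
    nlinarith
  calc |δ * (h₂ η - h₁ η)| / |Psi δ h₁ η * Psi δ h₂ η| ≤ |δ * (h₂ η - h₁ η)| / 1 := by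
        exact div_le_div_of_nonneg_left (abs_nonneg _) one_pos hden
    _ ≤ δ * M := by rw [div_one]; exact hnum

include hc₁ hc₂

lemma A_diff {η : ℝ} (hη : 0 ≤ η) : |A δ h₁ η - A δ h₂ η| ≤ δ * M * η ^ 2 / 2 := by
  have i1 := ratio_ii hδ hb₁ hc₁ hη
  have i2 := ratio_ii hδ hb₂ hc₂ hη
  rw [A, A, ← intervalIntegral.integral_sub i1 i2]
  have h1 := intervalIntegral.abs_integral_le_integral_abs
    (f := fun ξ => ξ / Psi δ h₁ ξ - ξ / Psi δ h₂ ξ) (μ := volume) hη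
  have h2 : ∫ ξ in (0:ℝ)..η, |ξ / Psi δ h₁ ξ - ξ / Psi δ h₂ ξ|
      ≤ ∫ ξ in (0:ℝ)..η, δ * M * ξ := by
    apply intervalIntegral.integral_mono_on hη (i1.sub i2).abs
      ((continuous_const.mul continuous_id).intervalIntegrable 0 η)
    intro ξ hξ
    have e : ξ / Psi δ h₁ ξ - ξ / Psi δ h₂ ξ = ξ * (1 / Psi δ h₁ ξ - 1 / Psi δ h₂ ξ) := by
      ring
    rw [e, abs_mul, abs_of_nonneg hξ.1]
    calc ξ * |1 / Psi δ h₁ ξ - 1 / Psi δ h₂ ξ| ≤ ξ * (δ * M) :=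
          mul_le_mul_of_nonneg_left (inv_Psi_diff hδ hb₁ hb₂ hM hξ.1) hξ.1
      _ = δ * M * ξ := by ring
  have h3 : ∫ ξ in (0:ℝ)..η, δ * M * ξ = δ * M * η ^ 2 / 2 := by
    rw [intervalIntegral.integral_const_mul, integral_id]; ring
  linarith

lemma F_diff {η : ℝ} (hη : 0 ≤ η) :
    |F δ h₁ η - F δ h₂ η| ≤ δ * M * (1 + η ^ 2) * Real.exp (-(1+δ)⁻¹ * η ^ 2) := by
  have hM0 : 0 ≤ M := M_nonneg hδ hb₁ hb₂ hM
  set c := (1+δ)⁻¹ * η ^ 2 with hcdef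
  have hce : c = 2 * (η ^ 2 / 2 / (1 + δ)) := by rw [hcdef]; field_simp
  have hc1 : c ≤ 2 * A δ h₁ η := by
    have := A_ge hδ hb₁ hc₁ hη; linarith
  have hc2 : c ≤ 2 * A δ h₂ η := by
    have := A_ge hδ hb₂ hc₂ hη; linarith
  have hE1 : |Real.exp (-(2 * A δ h₁ η)) - Real.exp (-(2 * A δ h₂ η))|
      ≤ Real.exp (-c) * |2 * A δ h₁ η - 2 * A δ h₂ η| := exp_contraction hc1 hc2
  have hA := A_diff hδ hb₁ hc₁ hb₂ hc₂ hM hη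
  have h2A : |2 * A δ h₁ η - 2 * A δ h₂ η| ≤ δ * M * η ^ 2 := by
    have e : 2 * A δ h₁ η - 2 * A δ h₂ η = 2 * (A δ h₁ η - A δ h₂ η) := by ring
    rw [e, abs_mul, abs_of_nonneg (by norm_num : (0:ℝ) ≤ 2)]
    linarith
  have hE1' : |Real.exp (-(2 * A δ h₁ η)) - Real.exp (-(2 * A δ h₂ η))|
      ≤ Real.exp (-c) * (δ * M * η ^ 2) :=
    hE1.trans (mul_le_mul_of_nonneg_left h2A (Real.exp_pos _).le)
  have hPsi1 : |1 / Psi δ h₁ η| ≤ 1 := by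
    rw [abs_of_pos (div_pos one_pos (Psi_pos hδ hb₁ hη)),
      div_le_one (Psi_pos hδ hb₁ hη)]
    exact Psi_ge hδ hb₁ hη
  have hE2 : |Real.exp (-(2 * A δ h₂ η))| ≤ Real.exp (-c) := by
    rw [abs_of_pos (Real.exp_pos _)]
    exact Real.exp_le_exp.mpr (by linarith)
  have key : F δ h₁ η - F δ h₂ η
      = (1 / Psi δ h₁ η) * (Real.exp (-(2 * A δ h₁ η)) - Real.exp (-(2 * A δ h₂ η)))
        + (1 / Psi δ h₁ η - 1 / Psi δ h₂ η) * Real.exp (-(2 * A δ h₂ η)) := by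
    rw [F_eq, F_eq]
    have e1 : -(2 * A δ h₁ η) = -2 * A δ h₁ η := by ring
    have e2 : -(2 * A δ h₂ η) = -2 * A δ h₂ η := by ring
    rw [e1, e2]; ring
  rw [key]
  calc |(1 / Psi δ h₁ η) * (Real.exp (-(2 * A δ h₁ η)) - Real.exp (-(2 * A δ h₂ η)))
        + (1 / Psi δ h₁ η - 1 / Psi δ h₂ η) * Real.exp (-(2 * A δ h₂ η))|
      ≤ |1 / Psi δ h₁ η| * |Real.exp (-(2 * A δ h₁ η)) - Real.exp (-(2 * A δ h₂ η))|
        + |1 / Psi δ h₁ η - 1 / Psi δ h₂ η| * |Real.exp (-(2 * A δ h₂ η))| := by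
        refine (abs_add_le _ _).trans ?_
        rw [abs_mul, abs_mul]
    _ ≤ 1 * (Real.exp (-c) * (δ * M * η ^ 2)) + (δ * M) * Real.exp (-c) := by
        apply add_le_add
        · exact mul_le_mul hPsi1 hE1' (abs_nonneg _) zero_le_one
        · exact mul_le_mul (inv_Psi_diff hδ hb₁ hb₂ hM hη) hE2 (abs_nonneg _)
            (by positivity)
    _ = δ * M * (1 + η ^ 2) * Real.exp (-c) := by ring
    _ = δ * M * (1 + η ^ 2) * Real.exp (-(1+δ)⁻¹ * η ^ 2) := by rw [hcdef]; ring_nf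

end diff

/-! ### The dominating Gaussian integral -/

lemma Gint_integrable (hδ : 0 < δ) (M : ℝ) :
    IntegrableOn (fun η : ℝ => δ * M * (1 + η ^ 2) * Real.exp (-(1+δ)⁻¹ * η ^ 2)) (Ioi 0) := by
  have hbp : (0:ℝ) < (1+δ)⁻¹ := by positivity
  have base : IntegrableOn
      (fun η : ℝ => δ * M * (Real.exp (-(1+δ)⁻¹ * η ^ 2) + η ^ 2 * Real.exp (-(1+δ)⁻¹ * η ^ 2)))
      (Ioi 0) :=
    ((integrable_exp_neg_mul_sq hbp).integrableOn.add (int_sq_gauss hbp)).const_mul _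
  exact base.congr_fun (fun x _ => by ring) measurableSet_Ioi

lemma Gint_eq (hδ : 0 < δ) (M : ℝ) :
    ∫ η in Ioi (0:ℝ), δ * M * (1 + η ^ 2) * Real.exp (-(1+δ)⁻¹ * η ^ 2)
      = δ * M * (√π * √(1+δ) * (3+δ) / 4) := by
  have hbp : (0:ℝ) < (1+δ)⁻¹ := by positivity
  have e : ∀ η : ℝ, δ * M * (1 + η ^ 2) * Real.exp (-(1+δ)⁻¹ * η ^ 2)
      = δ * M * (Real.exp (-(1+δ)⁻¹ * η ^ 2) + η ^ 2 * Real.exp (-(1+δ)⁻¹ * η ^ 2)) :=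
    fun η => by ring
  simp_rw [e]
  rw [MeasureTheory.integral_const_mul,
    integral_add ((integrable_exp_neg_mul_sq hbp).integrableOn) (int_sq_gauss hbp),
    integral_gaussian_Ioi, gauss2 hbp]
  have he : π / (1+δ)⁻¹ = π * (1+δ) := by field_simp
  rw [he, Real.sqrt_mul pi_pos.le]
  have h1δ : (1:ℝ) + δ ≠ 0 := by positivity
  field_simp
  ring

lemma interval_le_Ioi {f : ℝ → ℝ} (hf : IntegrableOn f (Ioi 0))
    (h0 : ∀ x ∈ Ioi (0:ℝ), 0 ≤ f x) {x : ℝ} (hx : 0 ≤ x) :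
    ∫ η in (0:ℝ)..x, f η ≤ ∫ η in Ioi (0:ℝ), f η := by
  rw [intervalIntegral.integral_of_le hx]
  exact setIntegral_mono_set hf ((ae_restrict_iff' measurableSet_Ioi).2 (ae_of_all _ h0))
    (HasSubset.Subset.eventuallyLE Ioc_subset_Ioi_self)

end TauAux

open TauAux Set in
theorem tau_lipschitz_bound (δ : ℝ) (hδ : 0 < δ)
    (h₁ h₂ : ℝ → ℝ) (hK₁ : MemK h₁) (hK₂ : MemK h₂) :
    supNorm ((fun x => Ch δ h₁ * ∫ η in (0:ℝ)..x, F δ h₁ η) -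
             (fun x => Ch δ h₂ * ∫ η in (0:ℝ)..x, F δ h₂ η)) ≤
      (δ / 2 * (1 + δ) ^ ((3:ℝ)/2) * (3 + δ) * (1 + (1 + δ) ^ ((3:ℝ)/2))) *
        supNorm (h₁ - h₂) := by
  obtain ⟨ha₁, hb₁, -, -⟩ := hK₁
  obtain ⟨ha₂, hb₂, -, -⟩ := hK₂
  have hc₁ : ContinuousOn h₁ (Ici 0) := ha₁.continuousOn
  have hc₂ : ContinuousOn h₂ (Ici 0) := ha₂.continuousOn
  set M := supNorm (h₁ - h₂) with hMdef
  have hbdd : BddAbove (Set.range fun x : Set.Ici (0:ℝ) => |(h₁ - h₂) (x:ℝ)|) := by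
    refine ⟨2, ?_⟩
    rintro y ⟨⟨x, hx⟩, rfl⟩
    have u1 := hb₁ x hx; have u2 := hb₂ x hx
    simp only [Pi.sub_apply]
    rw [abs_le]; constructor <;> linarith [u1.1, u1.2, u2.1, u2.2]
  have hM : ∀ x ≥ (0:ℝ), |h₁ x - h₂ x| ≤ M := by
    intro x hx
    have := le_ciSup hbdd (⟨x, hx⟩ : Set.Ici (0:ℝ))
    simpa [supNorm, hMdef] using this
  have hM0 : 0 ≤ M := M_nonneg hδ hb₁ hb₂ hM
  set D := δ * M * (√π * √(1+δ) * (3+δ) / 4) with hDdef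
  have hD0 : 0 ≤ D := by rw [hDdef]; positivity
  have ht₁ := Itot_pos hδ hb₁ hc₁
  have ht₂ := Itot_pos hδ hb₂ hc₂
  have hC₁pos := Ch_pos hδ hb₁ hc₁
  have hC₂pos := Ch_pos hδ hb₂ hc₂
  have hC₁le := Ch_le hδ hb₁ hc₁
  have hsp : (0:ℝ) < √π := Real.sqrt_pos.mpr pi_pos
  have hs1 : (1:ℝ) ≤ √(1+δ) := by
    nlinarith [Real.sq_sqrt (show (0:ℝ) ≤ 1+δ by linarith), Real.sqrt_nonneg (1+δ)]
  -- the difference of the total integrals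
  have hGcont : Continuous (fun η : ℝ => δ * M * (1 + η ^ 2) * Real.exp (-(1+δ)⁻¹ * η ^ 2)) := by
    apply Continuous.mul
    · exact continuous_const.mul (continuous_const.add (continuous_pow 2))
    · exact Real.continuous_exp.comp (continuous_const.mul (continuous_pow 2))
  have hItd : |Itot δ h₁ - Itot δ h₂| ≤ D := by
    have e : Itot δ h₁ - Itot δ h₂ = ∫ η in Ioi (0:ℝ), (F δ h₁ η - F δ h₂ η) :=
      (integral_sub (F_intOn hδ hb₁ hc₁) (F_intOn hδ hb₂ hc₂)).symm
    rw [e]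
    calc |∫ η in Ioi (0:ℝ), (F δ h₁ η - F δ h₂ η)|
        ≤ ∫ η in Ioi (0:ℝ), |F δ h₁ η - F δ h₂ η| := by
          simpa [Real.norm_eq_abs] using
            MeasureTheory.norm_integral_le_integral_norm
              (μ := volume.restrict (Ioi 0)) (fun η => F δ h₁ η - F δ h₂ η)
      _ ≤ ∫ η in Ioi (0:ℝ), δ * M * (1 + η ^ 2) * Real.exp (-(1+δ)⁻¹ * η ^ 2) := by
          apply setIntegral_mono_on
            (((F_intOn hδ hb₁ hc₁).sub (F_intOn hδ hb₂ hc₂)).abs)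
            (Gint_integrable hδ M) measurableSet_Ioi
          intro η hη
          exact F_diff hδ hb₁ hc₁ hb₂ hc₂ hM (le_of_lt hη)
      _ = D := by rw [Gint_eq hδ M]
  haveI : Nonempty (Set.Ici (0:ℝ)) := ⟨⟨0, Set.self_mem_Ici⟩⟩
  apply ciSup_le
  rintro ⟨x, hx⟩
  simp only [Pi.sub_apply]
  have hFi1 : IntervalIntegrable (F δ h₁) volume 0 x :=
    ((F_contOn hδ hb₁ hc₁).mono (by rw [uIcc_of_le hx]; exact Icc_subset_Ici_self)).intervalIntegrable
  have hFi2 : IntervalIntegrable (F δ h₂) volume 0 x :=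
    ((F_contOn hδ hb₂ hc₂).mono (by rw [uIcc_of_le hx]; exact Icc_subset_Ici_self)).intervalIntegrable
  set I₁ := ∫ η in (0:ℝ)..x, F δ h₁ η with hI1def
  set I₂ := ∫ η in (0:ℝ)..x, F δ h₂ η with hI2def
  have hIdiff : |I₁ - I₂| ≤ D := by
    rw [hI1def, hI2def, ← intervalIntegral.integral_sub hFi1 hFi2]
    calc |∫ η in (0:ℝ)..x, (F δ h₁ η - F δ h₂ η)|
        ≤ ∫ η in (0:ℝ)..x, |F δ h₁ η - F δ h₂ η| :=
          intervalIntegral.abs_integral_le_integral_abs hx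
      _ ≤ ∫ η in (0:ℝ)..x, δ * M * (1 + η ^ 2) * Real.exp (-(1+δ)⁻¹ * η ^ 2) := by
          apply intervalIntegral.integral_mono_on hx ((hFi1.sub hFi2).abs)
            (hGcont.intervalIntegrable 0 x)
          intro η hη
          exact F_diff hδ hb₁ hc₁ hb₂ hc₂ hM hη.1
      _ ≤ ∫ η in Ioi (0:ℝ), δ * M * (1 + η ^ 2) * Real.exp (-(1+δ)⁻¹ * η ^ 2) := by
          apply interval_le_Ioi (Gint_integrable hδ M) ?_ hx
          intro η hη
          positivity
      _ = D := by rw [Gint_eq hδ M]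
  have hI20 : 0 ≤ I₂ :=
    intervalIntegral.integral_nonneg hx (fun η hη => (F_pos hδ hb₂ hc₂ hη.1).le)
  have hI2le : I₂ ≤ Itot δ h₂ :=
    interval_le_Ioi (F_intOn hδ hb₂ hc₂)
      (fun η hη => (F_pos hδ hb₂ hc₂ (le_of_lt hη)).le) hx
  have eC : Ch δ h₁ - Ch δ h₂ = (Itot δ h₂ - Itot δ h₁) * (Ch δ h₁ * Ch δ h₂) := by
    rw [Ch, Ch]
    field_simp
  have hCC : |Ch δ h₁ - Ch δ h₂| ≤ D * (Ch δ h₁ * Ch δ h₂) := by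
    rw [eC, abs_mul, abs_of_pos (mul_pos hC₁pos hC₂pos)]
    apply mul_le_mul_of_nonneg_right ?_ (mul_pos hC₁pos hC₂pos).le
    rw [abs_sub_comm]; exact hItd
  have hC2I : Ch δ h₂ * I₂ ≤ 1 := by
    rw [Ch]
    calc (Itot δ h₂)⁻¹ * I₂ ≤ (Itot δ h₂)⁻¹ * Itot δ h₂ :=
          mul_le_mul_of_nonneg_left hI2le (inv_pos.mpr ht₂).le
      _ = 1 := inv_mul_cancel₀ ht₂.ne'
  have key : Ch δ h₁ * I₁ - Ch δ h₂ * I₂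
      = Ch δ h₁ * (I₁ - I₂) + (Ch δ h₁ - Ch δ h₂) * I₂ := by ring
  have main : |Ch δ h₁ * I₁ - Ch δ h₂ * I₂| ≤ 2 * (2*(1+δ)/√π) * D := by
    rw [key]
    calc |Ch δ h₁ * (I₁ - I₂) + (Ch δ h₁ - Ch δ h₂) * I₂|
        ≤ |Ch δ h₁| * |I₁ - I₂| + |Ch δ h₁ - Ch δ h₂| * |I₂| := by
          refine (abs_add_le _ _).trans ?_
          rw [abs_mul, abs_mul]
      _ ≤ Ch δ h₁ * D + (D * (Ch δ h₁ * Ch δ h₂)) * I₂ := by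
          apply add_le_add
          · rw [abs_of_pos hC₁pos]
            exact mul_le_mul_of_nonneg_left hIdiff hC₁pos.le
          · rw [abs_of_nonneg hI20]
            exact mul_le_mul_of_nonneg_right hCC hI20
      _ = Ch δ h₁ * D + (D * Ch δ h₁) * (Ch δ h₂ * I₂) := by ring
      _ ≤ Ch δ h₁ * D + (D * Ch δ h₁) * 1 := by
          apply add_le_add_right
          exact mul_le_mul_of_nonneg_left hC2I (by positivity)
      _ = 2 * Ch δ h₁ * D := by ring
      _ ≤ 2 * (2*(1+δ)/√π) * D := by
          apply mul_le_mul_of_nonneg_right ?_ hD0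
          linarith
  refine main.trans ?_
  -- final numeric computation
  have hrpow : (1+δ) ^ ((3:ℝ)/2) = (1+δ) * √(1+δ) := by
    rw [show (3:ℝ)/2 = 1 + 1/2 by norm_num, Real.rpow_add (by positivity), Real.rpow_one,
      ← Real.sqrt_eq_rpow]
  have hLHS : 2 * (2*(1+δ)/√π) * D = δ * M * (1+δ) * √(1+δ) * (3+δ) := by
    rw [hDdef]
    field_simp
    ring
  rw [hLHS, hrpow]
  have ht : 0 ≤ δ * M * ((1+δ) * √(1+δ)) * (3+δ) * ((1+δ) * √(1+δ) - 1) := by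
    apply mul_nonneg
    · positivity
    · nlinarith
  nlinarith [ht]
end
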